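/- arXiv:2002.09649 — 11 statements merged into one kernel-verified Lean document; each statement's English description precedes it below -/
import Mathlib

section
/- Let A = [A_{i,j}]_{i,j=1}^m ∈ M_m(M_n) be a positive semidefinite block matrix. Then the block matrix whose (i,j) block is A_{j,i} + (tr A_{j,i}) I_n is positive semidefinite. (This is the complete copositivity part of the statement that the map Φ(X) = X + (tr X) I is completely PPT.) -/
open Matrix Kronecker
open scoped ComplexOrder

/-!
With `S_{ab} = E_{ab} + E_{ba}` one has `∑_{a,b} S_{ab} Y S_{ab} = 2 (Yᵀ + (tr Y) Iₙ)` for every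
`Y ∈ Mₙ`. The `(i,j)` block of the full transpose `Aᵀ` is `A_{j,i}ᵀ`, so conjugating `Aᵀ` by
`Iₘ ⊗ S_{ab}` and summing over `a, b` gives twice the block matrix `[A_{j,i} + (tr A_{j,i}) Iₙ]`.
Since `Aᵀ` is positive semidefinite and each `Iₘ ⊗ S_{ab}` is Hermitian, every summand is
positive semidefinite, hence so is the sum.
-/

/-- The first partial trace of an `m × m` block matrix with `n × n` blocks:
the sum of the diagonal blocks. -/
noncomputable def ptrace1 (m n : ℕ) (A : Matrix (Fin m × Fin n) (Fin m × Fin n) ℂ) :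
    Matrix (Fin n) (Fin n) ℂ :=
  Matrix.of fun r s => ∑ i, A (i, r) (i, s)

/-- The second partial trace of an `m × m` block matrix with `n × n` blocks:
the `m × m` matrix of traces of the blocks. -/
noncomputable def ptrace2 (m n : ℕ) (A : Matrix (Fin m × Fin n) (Fin m × Fin n) ℂ) :
    Matrix (Fin m) (Fin m) ℂ :=
  Matrix.of fun i j => ∑ r, A (i, r) (j, r)

/-- The partial transpose of a block matrix: the `(i,j)` block of `Aᵗᵖ` is `A_{j,i}`. -/
noncomputable def ptranspose (m n : ℕ) (A : Matrix (Fin m × Fin n) (Fin m × Fin n) ℂ) :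
    Matrix (Fin m × Fin n) (Fin m × Fin n) ℂ :=
  Matrix.of fun p q => A (q.1, p.2) (p.1, q.2)

def symmSingle {n R : Type*} [DecidableEq n] [Semiring R] (a b : n) : Matrix n n R :=
  single a b 1 + single b a 1

lemma isHermitian_symmSingle {n R : Type*} [DecidableEq n] [Semiring R] [StarRing R] (a b : n) :
    (symmSingle a b : Matrix n n R).IsHermitian := by
  simp [symmSingle, IsHermitian, conjTranspose_single, add_comm]

lemma isHermitian_one_kronecker {m n R : Type*} [DecidableEq m] [CommSemiring R] [StarRing R]
    {B : Matrix n n R} (hB : B.IsHermitian) : ((1 : Matrix m m R) ⊗ₖ B).IsHermitian := by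
  rw [IsHermitian, conjTranspose_kronecker, conjTranspose_one, hB.eq]

lemma Matrix.PosSemidef.mul_mul_of_isHermitian {n R : Type*} [Fintype n] [CommRing R]
    [PartialOrder R] [StarRing R] {A V : Matrix n n R} (hA : A.PosSemidef) (hV : V.IsHermitian) :
    (V * A * V).PosSemidef := by
  simpa only [hV.eq] using hA.mul_mul_conjTranspose_same V

lemma ptranspose_add_ptrace2_kronecker_one (m n : ℕ)
    (A : Matrix (Fin m × Fin n) (Fin m × Fin n) ℂ) :
    ptranspose m n A + ptrace2 m n (ptranspose m n A) ⊗ₖ (1 : Matrix (Fin n) (Fin n) ℂ) =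
      (1 / 2 : ℂ) • ∑ p : Fin n × Fin n,
        ((1 : Matrix (Fin m) (Fin m) ℂ) ⊗ₖ symmSingle p.1 p.2) * Aᵀ * (1 ⊗ₖ symmSingle p.1 p.2) := by
  ext ⟨i, r⟩ ⟨j, s⟩
  simp only [ptranspose, ptrace2, symmSingle, of_apply, Matrix.add_apply, Matrix.smul_apply,
    Matrix.sum_apply, kroneckerMap_apply, mul_apply, one_apply, single_apply, transpose_apply,
    Fintype.sum_prod_type, ite_and, mul_ite, ite_mul, mul_add, add_mul, mul_one, one_mul,
    mul_zero, zero_mul, Finset.sum_add_distrib, Finset.sum_ite_irrel, Finset.sum_ite_eq,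
    Finset.sum_ite_eq', Finset.mem_univ, ↓reduceIte, Finset.sum_const_zero, eq_comm (a := s),
    smul_eq_mul, one_div]
  split_ifs <;> ring

/-- If `A = [A_{i,j}]` is positive semidefinite, then the block matrix whose
`(i,j)` block is `A_{j,i} + (tr A_{j,i}) Iₙ`, i.e. `Aᵗᵖ + (tr₂ Aᵗᵖ) ⊗ Iₙ`,
is positive semidefinite. -/
theorem stmt_1 (m n : ℕ) (A : Matrix (Fin m × Fin n) (Fin m × Fin n) ℂ)
    (hA : A.PosSemidef) :
    (ptranspose m n A +
      (ptrace2 m n (ptranspose m n A) ⊗ₖ (1 : Matrix (Fin n) (Fin n) ℂ))).PosSemidef := by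
  rw [ptranspose_add_ptrace2_kronecker_one]
  refine (posSemidef_sum _ fun p _ => ?_).smul (by rw [Complex.le_def]; norm_num)
  exact hA.transpose.mul_mul_of_isHermitian (isHermitian_one_kronecker (isHermitian_symmSingle _ _))
end

section
/- Let A = [A_{i,j}]_{i,j=1}^m ∈ M_m(M_n) be positive semidefinite. Then (tr A) I_{mn} − (tr₂ A) ⊗ I_n ≥ I_m ⊗ (tr₁ A) − A. -/
/-!
Let `R(Y) = (tr Y) I - Y` be the reduction map. The matrix in the theorem is `(R ⊗ R)(A)`.
The map `R` is completely copositive: with `F i j = E i j - E j i` (`antisymmUnit i j`), one has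
`∑ i j, F i j * Yᵀ * (F i j)ᴴ = 2 R(Y)`. Taking tensor products gives
`∑ i j k l, (F i j ⊗ F k l) * Aᵀ * (F i j ⊗ F k l)ᴴ = 4 (R ⊗ R)(A)`, which is a sum of
congruences of the positive semidefinite matrix `Aᵀ`.
-/

open Matrix Kronecker
open scoped ComplexOrder

namespace Matrix

variable {ι R : Type*} [DecidableEq ι] [Ring R]

def antisymmUnit (i j : ι) : Matrix ι ι R := single i j 1 - single j i 1

lemma antisymmUnit_apply (i j a c : ι) :
    (antisymmUnit i j : Matrix ι ι R) a c =
      (1 : Matrix ι ι R) i a * (1 : Matrix ι ι R) j c -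
        (1 : Matrix ι ι R) j a * (1 : Matrix ι ι R) i c := by
  simp only [antisymmUnit, sub_apply, single_apply, one_apply]
  split_ifs <;> grind

lemma conjTranspose_antisymmUnit [StarRing R] (i j : ι) :
    (antisymmUnit i j : Matrix ι ι R)ᴴ = antisymmUnit j i := by
  simp [antisymmUnit, conjTranspose_single]

end Matrix

noncomputable def reductionTensor (m n : ℕ) (A : Matrix (Fin m × Fin n) (Fin m × Fin n) ℂ) :
    Matrix (Fin m × Fin n) (Fin m × Fin n) ℂ :=
  A.trace • 1 - ptrace2 m n A ⊗ₖ 1 - (1 ⊗ₖ ptrace1 m n A - A)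

theorem sum_antisymmUnit_kronecker_mul_transpose_mul_conjTranspose (m n : ℕ)
    (A : Matrix (Fin m × Fin n) (Fin m × Fin n) ℂ) :
    ∑ i, ∑ j, ∑ k, ∑ l, (antisymmUnit i j ⊗ₖ antisymmUnit k l) * Aᵀ *
      (antisymmUnit i j ⊗ₖ antisymmUnit k l)ᴴ = (4 : ℂ) • reductionTensor m n A := by
  simp only [conjTranspose_kronecker, conjTranspose_antisymmUnit]
  ext ⟨a, r⟩ ⟨b, s⟩
  simp [Matrix.sum_apply, mul_apply, antisymmUnit_apply, one_apply, reductionTensor, ptrace1,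
    ptrace2, trace, Fintype.sum_prod_type, sub_mul, mul_sub, Finset.sum_sub_distrib, ite_mul,
    mul_ite]
  by_cases hab : a = b <;> by_cases hrs : r = s <;>
    simp [hab, hrs, eq_comm (a := b), eq_comm (a := s)] <;> ring

/-- If `A` is positive semidefinite, then
`(tr A) I_{mn} − (tr₂ A) ⊗ Iₙ ≥ Iₘ ⊗ (tr₁ A) − A`. -/
theorem stmt_2 (m n : ℕ) (A : Matrix (Fin m × Fin n) (Fin m × Fin n) ℂ)
    (hA : A.PosSemidef) :
    (A.trace • (1 : Matrix (Fin m × Fin n) (Fin m × Fin n) ℂ)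
      - ptrace2 m n A ⊗ₖ (1 : Matrix (Fin n) (Fin n) ℂ)
      - ((1 : Matrix (Fin m) (Fin m) ℂ) ⊗ₖ ptrace1 m n A - A)).PosSemidef := by
  have h4 : ((4 : ℂ) • reductionTensor m n A).PosSemidef := by
    rw [← sum_antisymmUnit_kronecker_mul_transpose_mul_conjTranspose]
    exact posSemidef_sum _ fun i _ => posSemidef_sum _ fun j _ => posSemidef_sum _ fun k _ =>
      posSemidef_sum _ fun l _ => hA.transpose.mul_mul_conjTranspose_same _
  have h := h4.smul (inv_nonneg.mpr (by norm_num : (0 : ℂ) ≤ 4))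
  rwa [smul_smul, inv_mul_cancel₀ four_ne_zero, one_smul] at h
end

section
/- Let A = [A_{i,j}]_{i,j=1}^m ∈ M_m(M_n) be positive semidefinite. Then (tr A) I_{mn} − (tr₂ A) ⊗ I_n ≥ A − I_m ⊗ (tr₁ A); equivalently, (tr A) I_{mn} + I_m ⊗ (tr₁ A) ≥ A + (tr₂ A) ⊗ I_n. -/
open Matrix Kronecker
open scoped ComplexOrder

/-! The quadratic form of `Φ(A) = (tr A) I + I ⊗ tr₁ A − A − tr₂ A ⊗ I` at a vector `y` is a
fourfold sum over block indices `i, j` and in-block indices `r, s`. Averaging it over the swaps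
`i ↔ j` and `r ↔ s` turns the summand into a quadratic form of `A` itself:
`4 ⟪y, Φ(A) y⟫ = ∑ ⟪v, A v⟫`, where
`v = ȳ_{js} e_{ir} − ȳ_{is} e_{jr} + ȳ_{jr} e_{is} − ȳ_{ir} e_{js}`
is antisymmetric in `i, j` and symmetric in `r, s`. Hence `Φ(A) ≥ 0` whenever `A ≥ 0`. -/

noncomputable def ptraceDefect {m n : ℕ} (A : Matrix (Fin m × Fin n) (Fin m × Fin n) ℂ) :
    Matrix (Fin m × Fin n) (Fin m × Fin n) ℂ :=
  A.trace • 1 + 1 ⊗ₖ ptrace1 m n A - (A + ptrace2 m n A ⊗ₖ 1)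

lemma Matrix.IsHermitian.kronecker {R ι κ : Type*} [CommSemiring R] [StarRing R]
    {P : Matrix ι ι R} {Q : Matrix κ κ R} (hP : P.IsHermitian) (hQ : Q.IsHermitian) :
    (P ⊗ₖ Q).IsHermitian := by
  rw [IsHermitian, conjTranspose_kronecker, hP.eq, hQ.eq]

lemma Matrix.IsHermitian.isSelfAdjoint_trace {R ι : Type*} [Fintype ι] [AddCommMonoid R]
    [StarAddMonoid R] {A : Matrix ι ι R} (hA : A.IsHermitian) : IsSelfAdjoint A.trace := by
  rw [IsSelfAdjoint, ← trace_conjTranspose, hA.eq]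

lemma sum_four_swaps {α β M : Type*} [Fintype α] [Fintype β] [AddCommMonoid M]
    (f : α → α → β → β → M) :
    ∑ i, ∑ j, ∑ r, ∑ s, (f i j r s + f j i r s + f i j s r + f j i s r)
      = 4 • ∑ i, ∑ j, ∑ r, ∑ s, f i j r s := by
  have swap_ij : ∑ i, ∑ j, ∑ r, ∑ s, f j i r s = ∑ i, ∑ j, ∑ r, ∑ s, f i j r s :=
    Finset.sum_comm
  have swap_rs (g : α → α → β → β → M) :
      ∑ i, ∑ j, ∑ r, ∑ s, g i j s r = ∑ i, ∑ j, ∑ r, ∑ s, g i j r s :=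
    Finset.sum_congr rfl fun _ _ => Finset.sum_congr rfl fun _ _ => Finset.sum_comm
  simp only [Finset.sum_add_distrib, swap_ij, swap_rs (fun i j r s => f j i r s), swap_rs f]
  abel

section QuadraticForm

variable {R ι κ : Type*} [CommRing R] [StarRing R] [Fintype ι] [Fintype κ]

lemma dotProduct_mulVec_prod (M : Matrix (ι × κ) (ι × κ) R) (y : ι × κ → R) :
    star y ⬝ᵥ (M *ᵥ y) = ∑ i, ∑ j, ∑ r, ∑ s, star (y (i, r)) * M (i, r) (j, s) * y (j, s) := by
  simp only [dotProduct, mulVec, Fintype.sum_prod_type, Finset.mul_sum, Pi.star_apply, mul_assoc]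
  exact Finset.sum_congr rfl fun _ _ => Finset.sum_comm

lemma dotProduct_one_kronecker_mulVec [DecidableEq ι] (P : Matrix κ κ R) (y : ι × κ → R) :
    star y ⬝ᵥ (((1 : Matrix ι ι R) ⊗ₖ P) *ᵥ y)
      = ∑ i, ∑ r, ∑ s, star (y (i, r)) * P r s * y (i, s) := by
  simp [dotProduct, mulVec, Fintype.sum_prod_type, Matrix.one_apply, Finset.mul_sum, mul_assoc]

lemma dotProduct_kronecker_one_mulVec [DecidableEq κ] (Q : Matrix ι ι R) (y : ι × κ → R) :
    star y ⬝ᵥ ((Q ⊗ₖ (1 : Matrix κ κ R)) *ᵥ y)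
      = ∑ i, ∑ j, ∑ r, star (y (i, r)) * Q i j * y (j, r) := by
  simp only [dotProduct, mulVec, Fintype.sum_prod_type]
  simp only [Pi.star_apply, kroneckerMap_apply, Matrix.one_apply, mul_ite, mul_one, mul_zero,
    ite_mul, zero_mul, Finset.sum_ite_eq, Finset.mem_univ, if_true, Finset.mul_sum, mul_assoc]
  exact Finset.sum_congr rfl fun _ _ => Finset.sum_comm

def ptraceDefectTerm (A : Matrix (ι × κ) (ι × κ) R) (y : ι × κ → R) (i j : ι) (r s : κ) : R :=
  A (i, r) (i, r) * (star (y (j, s)) * y (j, s))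
    + star (y (i, r)) * A (j, r) (j, s) * y (i, s)
    - star (y (i, r)) * A (i, r) (j, s) * y (j, s)
    - star (y (i, r)) * A (i, s) (j, s) * y (j, r)

def blockAntisymVec [DecidableEq ι] [DecidableEq κ] (y : ι × κ → R) (i j : ι) (r s : κ) :
    ι × κ → R :=
  Pi.single (i, r) (star (y (j, s))) - Pi.single (j, r) (star (y (i, s)))
    + Pi.single (i, s) (star (y (j, r))) - Pi.single (j, s) (star (y (i, r)))

lemma dotProduct_blockAntisymVec [DecidableEq ι] [DecidableEq κ]
    (A : Matrix (ι × κ) (ι × κ) R) (y : ι × κ → R) (i j : ι) (r s : κ) :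
    star (blockAntisymVec y i j r s) ⬝ᵥ (A *ᵥ blockAntisymVec y i j r s)
      = ptraceDefectTerm A y i j r s + ptraceDefectTerm A y j i r s
        + ptraceDefectTerm A y i j s r + ptraceDefectTerm A y j i s r := by
  simp only [blockAntisymVec, ptraceDefectTerm, star_sub, star_add, Pi.star_single, mulVec_sub,
    mulVec_add, sub_dotProduct, add_dotProduct, dotProduct_sub, dotProduct_add, mulVec_single,
    single_dotProduct, Pi.smul_apply, MulOpposite.smul_eq_mul_unop, MulOpposite.unop_op,
    col_apply, star_star]
  ring

end QuadraticForm

section PartialTrace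

variable {m n : ℕ} {A : Matrix (Fin m × Fin n) (Fin m × Fin n) ℂ}

lemma isHermitian_ptrace1 (hA : A.IsHermitian) :
    (ptrace1 m n A).IsHermitian := by
  ext r s
  simp only [conjTranspose_apply, ptrace1, of_apply, star_sum, hA.apply]

lemma isHermitian_ptrace2 (hA : A.IsHermitian) :
    (ptrace2 m n A).IsHermitian := by
  ext i j
  simp only [conjTranspose_apply, ptrace2, of_apply, star_sum, hA.apply]

lemma isHermitian_ptraceDefect (hA : A.IsHermitian) : (ptraceDefect A).IsHermitian :=
  ((isHermitian_one.smul hA.isSelfAdjoint_trace).add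
    (isHermitian_one.kronecker (isHermitian_ptrace1 hA))).sub
    (hA.add ((isHermitian_ptrace2 hA).kronecker isHermitian_one))

lemma dotProduct_ptraceDefect_mulVec (y : Fin m × Fin n → ℂ) :
    star y ⬝ᵥ (ptraceDefect A *ᵥ y) = ∑ i, ∑ j, ∑ r, ∑ s, ptraceDefectTerm A y i j r s := by
  have trace_term : A.trace • (star y ⬝ᵥ y)
      = ∑ i, ∑ j, ∑ r, ∑ s, A (i, r) (i, r) * (star (y (j, s)) * y (j, s)) := by
    simp only [smul_eq_mul, Matrix.trace, diag, dotProduct, Fintype.sum_prod_type,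
      Finset.sum_mul_sum, Pi.star_apply]
  have ptrace1_term : ∑ i, ∑ r, ∑ s, star (y (i, r)) * ptrace1 m n A r s * y (i, s)
      = ∑ i, ∑ j, ∑ r, ∑ s, star (y (i, r)) * A (j, r) (j, s) * y (i, s) := by
    simp only [ptrace1, of_apply, Finset.mul_sum, Finset.sum_mul]
    exact Finset.sum_congr rfl fun _ _ =>
      (Finset.sum_congr rfl fun _ _ => Finset.sum_comm).trans Finset.sum_comm
  have ptrace2_term : ∑ i, ∑ j, ∑ r, star (y (i, r)) * ptrace2 m n A i j * y (j, r)
      = ∑ i, ∑ j, ∑ r, ∑ s, star (y (i, r)) * A (i, s) (j, s) * y (j, r) := by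
    simp only [ptrace2, of_apply, Finset.mul_sum, Finset.sum_mul]
  rw [ptraceDefect, sub_mulVec, add_mulVec, add_mulVec, dotProduct_sub, dotProduct_add,
    dotProduct_add, smul_mulVec, one_mulVec, dotProduct_smul, dotProduct_one_kronecker_mulVec,
    dotProduct_mulVec_prod, dotProduct_kronecker_one_mulVec, trace_term, ptrace1_term,
    ptrace2_term]
  simp only [ptraceDefectTerm, Finset.sum_add_distrib, Finset.sum_sub_distrib]
  abel

lemma four_mul_dotProduct_ptraceDefect_mulVec (y : Fin m × Fin n → ℂ) :
    4 * (star y ⬝ᵥ (ptraceDefect A *ᵥ y))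
      = ∑ i, ∑ j, ∑ r, ∑ s,
          star (blockAntisymVec y i j r s) ⬝ᵥ (A *ᵥ blockAntisymVec y i j r s) := by
  simp only [dotProduct_blockAntisymVec, sum_four_swaps, dotProduct_ptraceDefect_mulVec,
    nsmul_eq_mul]
  norm_num

lemma posSemidef_ptraceDefect (hA : A.PosSemidef) : (ptraceDefect A).PosSemidef := by
  refine .of_dotProduct_mulVec_nonneg (isHermitian_ptraceDefect hA.isHermitian) fun y => ?_
  have four_mul_nonneg := four_mul_dotProduct_ptraceDefect_mulVec y ▸
    Finset.sum_nonneg fun i _ => Finset.sum_nonneg fun j _ => Finset.sum_nonneg fun r _ =>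
      Finset.sum_nonneg fun s _ => hA.dotProduct_mulVec_nonneg (blockAntisymVec y i j r s)
  simpa using mul_nonneg (by positivity : (0 : ℂ) ≤ 4⁻¹) four_mul_nonneg

end PartialTrace

/-- If `A` is positive semidefinite, then
`(tr A) I_{mn} − (tr₂ A) ⊗ Iₙ ≥ A − Iₘ ⊗ (tr₁ A)`; equivalently,
`(tr A) I_{mn} + Iₘ ⊗ (tr₁ A) ≥ A + (tr₂ A) ⊗ Iₙ`. -/
theorem stmt_3 (m n : ℕ) (A : Matrix (Fin m × Fin n) (Fin m × Fin n) ℂ)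
    (hA : A.PosSemidef) :
    (A.trace • (1 : Matrix (Fin m × Fin n) (Fin m × Fin n) ℂ)
      - ptrace2 m n A ⊗ₖ (1 : Matrix (Fin n) (Fin n) ℂ)
      - (A - (1 : Matrix (Fin m) (Fin m) ℂ) ⊗ₖ ptrace1 m n A)).PosSemidef ∧
    (A.trace • (1 : Matrix (Fin m × Fin n) (Fin m × Fin n) ℂ)
      + (1 : Matrix (Fin m) (Fin m) ℂ) ⊗ₖ ptrace1 m n A
      - (A + ptrace2 m n A ⊗ₖ (1 : Matrix (Fin n) (Fin n) ℂ))).PosSemidef := by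
  refine ⟨?_, posSemidef_ptraceDefect hA⟩
  convert posSemidef_ptraceDefect hA using 1
  rw [ptraceDefect]
  abel
end

section
/- Let A = [A_{i,j}]_{i,j=1}^m ∈ M_m(M_n) be positive semidefinite. Then the 2×2 block matrix [[ (tr A) I_{mn}, A ], [ A, (tr A) I_{mn} ]] ≥ [[ (tr₂ A) ⊗ I_n, I_m ⊗ (tr₁ A) ], [ I_m ⊗ (tr₁ A), (tr₂ A) ⊗ I_n ]], i.e., the difference of these two (2mn)×(2mn) matrices is positive semidefinite. -/
open Matrix Kronecker
open scoped ComplexOrder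

/-! Put `X = (tr A) I - tr₂ A ⊗ Iₙ` (`diagGap A`) and `Y = A - Iₘ ⊗ tr₁ A`
(`offDiagGap A`), so that the claim is `[[X, Y], [Y, X]] ≥ 0`; conjugating by
`[[1, 1], [1, -1]]` reduces this to `X + Y ≥ 0` and `X - Y ≥ 0`. Both `X` and `Y` are additive
in `A`, and a positive semidefinite `A` is a sum of rank-one matrices `v v*`, so it suffices to
treat `A = v v*`. Reading `v` and a test vector `y` as `m × n` arrays, symmetrising the quadruple
sum `⟨y, (X ± Y) y⟩` under `i ↔ j` and `r ↔ s` gives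
`4 ⟨y, (X ± Y) y⟩ = ∑ |v_ir y_js ± y_ir v_js - v_jr y_is ∓ v_is y_jr|² ≥ 0`. -/

section blocks
variable {𝕜 ι : Type*} [RCLike 𝕜] [Fintype ι] [DecidableEq ι]

theorem posSemidef_fromBlocks_of_add_of_sub {X Y : Matrix ι ι 𝕜}
    (hadd : (X + Y).PosSemidef) (hsub : (X - Y).PosSemidef) :
    (fromBlocks X Y Y X).PosSemidef := by
  have hsum :=
    (hadd.conjTranspose_mul_mul_same (fromCols (1 : Matrix ι ι 𝕜) (1 : Matrix ι ι 𝕜))).add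
      (hsub.conjTranspose_mul_mul_same (fromCols (1 : Matrix ι ι 𝕜) (-1)))
  convert hsum.smul (by norm_num : (0 : ℝ) ≤ 2⁻¹) using 1
  simp only [conjTranspose_fromCols_eq_fromRows_conjTranspose, conjTranspose_one,
    conjTranspose_neg, fromRows_mul, mul_fromCols, one_mul, Matrix.mul_one, neg_mul, Matrix.mul_neg,
    neg_sub, fromRows_neg, fromCols_fromRows_eq_fromBlocks, fromBlocks_add, fromBlocks_smul,
    fromBlocks_inj]
  refine ⟨?_, ?_, ?_, ?_⟩ <;> module

end blocks

theorem Matrix.IsHermitian.kronecker_s4 {R ι κ : Type*} [CommMagma R] [StarMul R]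
    {A : Matrix ι ι R} {B : Matrix κ κ R} (hA : A.IsHermitian) (hB : B.IsHermitian) :
    (A ⊗ₖ B).IsHermitian := by
  rw [IsHermitian, conjTranspose_kronecker, hA.eq, hB.eq]

section gaps
variable {m n : ℕ}

theorem ptrace1_add (A B : Matrix (Fin m × Fin n) (Fin m × Fin n) ℂ) :
    ptrace1 m n (A + B) = ptrace1 m n A + ptrace1 m n B := by
  ext
  simp [ptrace1, Finset.sum_add_distrib]

theorem ptrace2_add (A B : Matrix (Fin m × Fin n) (Fin m × Fin n) ℂ) :
    ptrace2 m n (A + B) = ptrace2 m n A + ptrace2 m n B := by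
  ext
  simp [ptrace2, Finset.sum_add_distrib]

theorem Matrix.IsHermitian.ptrace1 {A : Matrix (Fin m × Fin n) (Fin m × Fin n) ℂ}
    (hA : A.IsHermitian) :
    (ptrace1 m n A).IsHermitian := by
  ext
  simp [_root_.ptrace1, star_sum, hA.apply]

theorem Matrix.IsHermitian.ptrace2 {A : Matrix (Fin m × Fin n) (Fin m × Fin n) ℂ}
    (hA : A.IsHermitian) :
    (ptrace2 m n A).IsHermitian := by
  ext
  simp [_root_.ptrace2, star_sum, hA.apply]

noncomputable def diagGap :
    Matrix (Fin m × Fin n) (Fin m × Fin n) ℂ →+ Matrix (Fin m × Fin n) (Fin m × Fin n) ℂ :=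
  AddMonoidHom.mk'
    (fun A => A.trace • 1 - ptrace2 m n A ⊗ₖ (1 : Matrix (Fin n) (Fin n) ℂ)) fun A B => by
    simp only [trace_add, add_smul, ptrace2_add, add_kronecker]
    abel

noncomputable def offDiagGap :
    Matrix (Fin m × Fin n) (Fin m × Fin n) ℂ →+ Matrix (Fin m × Fin n) (Fin m × Fin n) ℂ :=
  AddMonoidHom.mk' (fun A => A - (1 : Matrix (Fin m) (Fin m) ℂ) ⊗ₖ ptrace1 m n A) fun A B => by
    simp only [ptrace1_add, kronecker_add]
    abel

theorem isHermitian_diagGap {A : Matrix (Fin m × Fin n) (Fin m × Fin n) ℂ}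
    (hA : A.IsHermitian) :
    (diagGap A).IsHermitian :=
  (isHermitian_one.smul (by simp [IsSelfAdjoint, ← trace_conjTranspose, hA.eq])).sub
    (hA.ptrace2.kronecker_s4 isHermitian_one)

theorem isHermitian_offDiagGap {A : Matrix (Fin m × Fin n) (Fin m × Fin n) ℂ}
    (hA : A.IsHermitian) :
    (offDiagGap A).IsHermitian :=
  hA.sub (isHermitian_one.kronecker_s4 hA.ptrace1)

end gaps

section symmetrization
variable {ι κ : Type*} [Fintype ι] [Fintype κ]

theorem sum_sum_sum_sum_swap_fst {M : Type*} [AddCommMonoid M] (f : ι → κ → ι → κ → M) :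
    ∑ i, ∑ r, ∑ j, ∑ s, f i r j s = ∑ i, ∑ r, ∑ j, ∑ s, f j r i s :=
  (Finset.sum_congr rfl fun _ _ => Finset.sum_comm).trans
    (Finset.sum_comm.trans (Finset.sum_congr rfl fun _ _ => Finset.sum_comm))

theorem sum_sum_sum_sum_swap_snd {M : Type*} [AddCommMonoid M] (f : ι → κ → ι → κ → M) :
    ∑ i, ∑ r, ∑ j, ∑ s, f i r j s = ∑ i, ∑ r, ∑ j, ∑ s, f i s j r :=
  Finset.sum_congr rfl fun _ _ => (Finset.sum_congr rfl fun _ _ => Finset.sum_comm).trans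
    (Finset.sum_comm.trans (Finset.sum_congr rfl fun _ _ => Finset.sum_comm))

theorem sum_nonneg_of_symmetrization_eq_star_mul_self (f g : ι → κ → ι → κ → ℂ)
    (h : ∀ i r j s,
      f i r j s + f j r i s + f i s j r + f j s i r = star (g i r j s) * g i r j s) :
    0 ≤ ∑ i, ∑ r, ∑ j, ∑ s, f i r j s := by
  have h4 : 4 * ∑ i, ∑ r, ∑ j, ∑ s, f i r j s
      = ∑ i, ∑ r, ∑ j, ∑ s, star (g i r j s) * g i r j s := by
    calc 4 * ∑ i, ∑ r, ∑ j, ∑ s, f i r j s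
        = (∑ i, ∑ r, ∑ j, ∑ s, f i r j s) + (∑ i, ∑ r, ∑ j, ∑ s, f j r i s)
          + (∑ i, ∑ r, ∑ j, ∑ s, f i s j r) + (∑ i, ∑ r, ∑ j, ∑ s, f j s i r) := by
          rw [← sum_sum_sum_sum_swap_fst f, ← sum_sum_sum_sum_swap_snd f,
            ← sum_sum_sum_sum_swap_snd fun i r j s => f j r i s, ← sum_sum_sum_sum_swap_fst f]
          ring
      _ = _ := by simp only [← Finset.sum_add_distrib, h]
  have h4_nonneg : 0 ≤ 4 * ∑ i, ∑ r, ∑ j, ∑ s, f i r j s :=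
    h4 ▸ Finset.sum_nonneg fun _ _ => Finset.sum_nonneg fun _ _ => Finset.sum_nonneg fun _ _ =>
      Finset.sum_nonneg fun _ _ => star_mul_self_nonneg _
  simpa only [inv_mul_cancel_left₀ (four_ne_zero : (4 : ℂ) ≠ 0)] using
    mul_nonneg (by positivity : (0 : ℂ) ≤ 4⁻¹) h4_nonneg

end symmetrization

section rankOne
variable {m n : ℕ} (v y : Fin m × Fin n → ℂ)

theorem dotProduct_diagGap_vecMulVec_mulVec :
    star y ⬝ᵥ (diagGap (vecMulVec v (star v)) *ᵥ y) = ∑ i, ∑ r, ∑ j, ∑ s,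
      (v (i, r) * star (v (i, r)) * (star (y (j, s)) * y (j, s))
        - star (y (i, r)) * v (i, s) * star (v (j, s)) * y (j, r)) := by
  have htrace : star y ⬝ᵥ (((vecMulVec v (star v)).trace •
        (1 : Matrix (Fin m × Fin n) (Fin m × Fin n) ℂ)) *ᵥ y)
      = ∑ i, ∑ r, ∑ j, ∑ s, v (i, r) * star (v (i, r)) * (star (y (j, s)) * y (j, s)) := by
    rw [smul_mulVec, one_mulVec, dotProduct_smul, smul_eq_mul, trace, dotProduct,
      Fintype.sum_mul_sum]
    simp [Fintype.sum_prod_type, vecMulVec_apply]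
  have hptrace2 : star y ⬝ᵥ
        ((ptrace2 m n (vecMulVec v (star v)) ⊗ₖ (1 : Matrix (Fin n) (Fin n) ℂ)) *ᵥ y)
      = ∑ i, ∑ r, ∑ j, ∑ s, star (y (i, r)) * v (i, s) * star (v (j, s)) * y (j, r) := by
    simp [dotProduct, mulVec, ptrace2, vecMulVec_apply, Fintype.sum_prod_type, Finset.mul_sum,
      Finset.sum_mul, one_apply, kroneckerMap_apply, mul_assoc]
  simp only [diagGap, AddMonoidHom.mk'_apply, sub_mulVec, dotProduct_sub, htrace, hptrace2,
    Finset.sum_sub_distrib]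

theorem dotProduct_offDiagGap_vecMulVec_mulVec :
    star y ⬝ᵥ (offDiagGap (vecMulVec v (star v)) *ᵥ y) = ∑ i, ∑ r, ∑ j, ∑ s,
      (star (y (i, r)) * v (i, r) * star (v (j, s)) * y (j, s)
        - star (y (i, r)) * v (j, r) * star (v (j, s)) * y (i, s)) := by
  have hself : star y ⬝ᵥ (vecMulVec v (star v) *ᵥ y)
      = ∑ i, ∑ r, ∑ j, ∑ s, star (y (i, r)) * v (i, r) * star (v (j, s)) * y (j, s) := by
    simp [dotProduct, mulVec, vecMulVec_apply, Fintype.sum_prod_type, Finset.mul_sum, mul_assoc]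
  have hptrace1 : star y ⬝ᵥ
        (((1 : Matrix (Fin m) (Fin m) ℂ) ⊗ₖ ptrace1 m n (vecMulVec v (star v))) *ᵥ y)
      = ∑ i, ∑ r, ∑ j, ∑ s, star (y (i, r)) * v (j, r) * star (v (j, s)) * y (i, s) := by
    simp only [dotProduct, Pi.star_apply, mulVec, ptrace1, vecMulVec_apply, kroneckerMap_apply,
      one_apply, of_apply, Finset.mul_sum, Finset.sum_mul, ite_mul, one_mul, zero_mul,
      Finset.sum_ite_irrel, Finset.sum_const_zero, mul_assoc, Fintype.sum_prod_type,
      Finset.sum_ite_eq, Finset.mem_univ, if_true]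
    exact Finset.sum_congr rfl fun _ _ => Finset.sum_congr rfl fun _ _ => Finset.sum_comm
  simp only [offDiagGap, AddMonoidHom.mk'_apply, sub_mulVec, dotProduct_sub, hself, hptrace1,
    Finset.sum_sub_distrib]

theorem posSemidef_diagGap_add_smul_offDiagGap_vecMulVec {ε : ℂ} (hε : ε = 1 ∨ ε = -1) :
    (diagGap (vecMulVec v (star v)) + ε • offDiagGap (vecMulVec v (star v))).PosSemidef := by
  have hv := (posSemidef_vecMulVec_self_star v).isHermitian
  have hε_real : IsSelfAdjoint ε := by rcases hε with rfl | rfl <;> simp [IsSelfAdjoint]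
  refine .of_dotProduct_mulVec_nonneg
    ((isHermitian_diagGap hv).add ((isHermitian_offDiagGap hv).smul hε_real)) fun y => ?_
  rw [add_mulVec, smul_mulVec, dotProduct_add, dotProduct_smul, smul_eq_mul,
    dotProduct_diagGap_vecMulVec_mulVec, dotProduct_offDiagGap_vecMulVec_mulVec]
  simp only [Finset.mul_sum, ← Finset.sum_add_distrib]
  refine sum_nonneg_of_symmetrization_eq_star_mul_self _
    (fun i r j s => v (i, r) * y (j, s) + ε * y (i, r) * v (j, s) - v (j, r) * y (i, s)
      - ε * v (i, s) * y (j, r)) fun i r j s => ?_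
  rcases hε with rfl | rfl <;>
    simp only [star_add, star_sub, star_mul', star_one, star_neg] <;> ring

end rankOne

theorem Matrix.PosSemidef.diagGap_add_smul_offDiagGap {m n : ℕ}
    {A : Matrix (Fin m × Fin n) (Fin m × Fin n) ℂ} (hA : A.PosSemidef) {ε : ℂ}
    (hε : ε = 1 ∨ ε = -1) :
    (diagGap A + ε • offDiagGap A).PosSemidef := by
  obtain ⟨k, v, rfl⟩ := posSemidef_iff_eq_sum_vecMulVec.mp hA
  simp only [map_sum, Finset.smul_sum, ← Finset.sum_add_distrib]
  exact posSemidef_sum _ fun i _ => posSemidef_diagGap_add_smul_offDiagGap_vecMulVec (v i) hε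

/-- If `A` is positive semidefinite, then the 2×2 block matrix
`[[(tr A) I, A], [A, (tr A) I]]` dominates
`[[(tr₂ A) ⊗ Iₙ, Iₘ ⊗ (tr₁ A)], [Iₘ ⊗ (tr₁ A), (tr₂ A) ⊗ Iₙ]]`. -/
theorem stmt_4 (m n : ℕ) (A : Matrix (Fin m × Fin n) (Fin m × Fin n) ℂ)
    (hA : A.PosSemidef) :
    (Matrix.fromBlocks
        (A.trace • (1 : Matrix (Fin m × Fin n) (Fin m × Fin n) ℂ)) A
        A (A.trace • (1 : Matrix (Fin m × Fin n) (Fin m × Fin n) ℂ))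
      - Matrix.fromBlocks
        (ptrace2 m n A ⊗ₖ (1 : Matrix (Fin n) (Fin n) ℂ))
        ((1 : Matrix (Fin m) (Fin m) ℂ) ⊗ₖ ptrace1 m n A)
        ((1 : Matrix (Fin m) (Fin m) ℂ) ⊗ₖ ptrace1 m n A)
        (ptrace2 m n A ⊗ₖ (1 : Matrix (Fin n) (Fin n) ℂ))).PosSemidef := by
  rw [show (_ - _ : Matrix _ _ ℂ)
      = fromBlocks (diagGap A) (offDiagGap A) (offDiagGap A) (diagGap A) by
    rw [sub_eq_add_neg, fromBlocks_neg, fromBlocks_add]; rfl]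
  refine posSemidef_fromBlocks_of_add_of_sub ?_ ?_
  · simpa using hA.diagGap_add_smul_offDiagGap (.inl rfl)
  · simpa [sub_eq_add_neg] using hA.diagGap_add_smul_offDiagGap (.inr rfl)
end

section
/- Let A = [A_{i,j}]_{i,j=1}^m ∈ M_m(M_n) be positive semidefinite. Then (tr A) I_{mn} ≥ I_m ⊗ (tr₁ A), i.e., (tr A) I_{mn} − I_m ⊗ (tr₁ A) is positive semidefinite; equivalently, (tr A) I_n ≥ tr₁ A. -/
/-!
Each diagonal block `Aᵢᵢ` of `A` is positive semidefinite, and a positive semidefinite matrix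
is dominated by its trace times the identity, since each of its (nonnegative) eigenvalues is at
most their sum. Summing over `i` gives `(tr A) Iₙ - tr₁ A = ∑ᵢ ((tr Aᵢᵢ) Iₙ - Aᵢᵢ) ≥ 0`, and
`(tr A) I_{mn} - Iₘ ⊗ tr₁ A = Iₘ ⊗ ((tr A) Iₙ - tr₁ A)` is a Kronecker product of positive
semidefinite matrices.
-/

open Matrix Kronecker
open scoped ComplexOrder

namespace Matrix

theorem PosSemidef.posSemidef_trace_smul_one_sub {n 𝕜 : Type*} [Fintype n] [DecidableEq n]
    [RCLike 𝕜] {B : Matrix n n 𝕜} (hB : B.PosSemidef) : (B.trace • 1 - B).PosSemidef := by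
  let U : Matrix n n 𝕜 := hB.1.eigenvectorUnitary
  have hconj : B.trace • 1 - B =
      U * (diagonal fun i => B.trace - hB.1.eigenvalues i) * star U := by
    conv_lhs => arg 2; rw [hB.1.spectral_theorem, Unitary.conjStarAlgAut_apply]
    simp [U, mul_sub, sub_mul, ← diagonal_sub, ← smul_one_eq_diagonal, Function.comp_def]
  rw [hconj, Unitary.isUnit_coe.posSemidef_star_right_conjugate_iff, posSemidef_diagonal_iff]
  intro i
  rw [hB.1.trace_eq_sum_eigenvalues, ← RCLike.ofReal_sum, ← RCLike.ofReal_sub,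
    RCLike.ofReal_nonneg, sub_nonneg]
  exact Finset.single_le_sum (fun j _ => hB.eigenvalues_nonneg j) (Finset.mem_univ i)

theorem trace_eq_sum_trace_submatrix_prodMk {ι κ R : Type*} [Fintype ι] [Fintype κ]
    [AddCommMonoid R] (A : Matrix (ι × κ) (ι × κ) R) :
    A.trace = ∑ i, (A.submatrix (Prod.mk i) (Prod.mk i)).trace :=
  Fintype.sum_prod_type _

theorem smul_one_sub_one_kronecker {ι κ R : Type*} [DecidableEq ι] [DecidableEq κ] [Ring R]
    (c : R) (M : Matrix κ κ R) :
    c • (1 : Matrix (ι × κ) (ι × κ) R) - (1 : Matrix ι ι R) ⊗ₖ M =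
      (1 : Matrix ι ι R) ⊗ₖ (c • 1 - M) := by
  ext ⟨i, k⟩ ⟨j, l⟩
  by_cases hij : i = j <;> by_cases hkl : k = l <;> simp [hij, hkl]

end Matrix

theorem ptrace1_eq_sum_submatrix (m n : ℕ) (A : Matrix (Fin m × Fin n) (Fin m × Fin n) ℂ) :
    ptrace1 m n A = ∑ i, A.submatrix (Prod.mk i) (Prod.mk i) := by
  ext r s
  simp [ptrace1, Matrix.sum_apply]

theorem trace_smul_one_sub_ptrace1 (m n : ℕ) (A : Matrix (Fin m × Fin n) (Fin m × Fin n) ℂ) :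
    A.trace • 1 - ptrace1 m n A =
      ∑ i, ((A.submatrix (Prod.mk i) (Prod.mk i)).trace • 1 -
        A.submatrix (Prod.mk i) (Prod.mk i)) := by
  rw [Finset.sum_sub_distrib, ← Finset.sum_smul, ← trace_eq_sum_trace_submatrix_prodMk,
    ptrace1_eq_sum_submatrix]

theorem posSemidef_trace_smul_one_sub_ptrace1 {m n : ℕ}
    {A : Matrix (Fin m × Fin n) (Fin m × Fin n) ℂ} (hA : A.PosSemidef) :
    (A.trace • 1 - ptrace1 m n A).PosSemidef := by
  rw [trace_smul_one_sub_ptrace1]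
  exact posSemidef_sum _ fun i _ => (hA.submatrix _).posSemidef_trace_smul_one_sub

/-- If `A` is positive semidefinite, then `(tr A) I_{mn} ≥ Iₘ ⊗ (tr₁ A)`;
equivalently `(tr A) Iₙ ≥ tr₁ A`. -/
theorem stmt_6 (m n : ℕ) (A : Matrix (Fin m × Fin n) (Fin m × Fin n) ℂ)
    (hA : A.PosSemidef) :
    (A.trace • (1 : Matrix (Fin m × Fin n) (Fin m × Fin n) ℂ)
      - (1 : Matrix (Fin m) (Fin m) ℂ) ⊗ₖ ptrace1 m n A).PosSemidef ∧
    (A.trace • (1 : Matrix (Fin n) (Fin n) ℂ) - ptrace1 m n A).PosSemidef := by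
  have hblock := posSemidef_trace_smul_one_sub_ptrace1 hA
  rw [smul_one_sub_one_kronecker]
  exact ⟨PosSemidef.one.kronecker hblock, hblock⟩
end

section
/- Let A = [A_{i,j}]_{i,j=1}^2 ∈ M_2(M_n) be a positive semidefinite 2×2 block matrix with n×n blocks. Then the 2×2 block matrix M = [[ (tr A_{2,2}) I_n + A_{2,2}, −A_{1,2} − (tr A_{1,2}) I_n ], [ −A_{2,1} − (tr A_{2,1}) I_n, (tr A_{1,1}) I_n + A_{1,1} ]] is positive semidefinite. -/
/-!
With `S i j = E i j + E j i`, one has `∑ i j, S i j * Bᵀ * S i j = 2 • (tr B • 1 + B)`. Conjugating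
the positive semidefinite matrix `Aᵀ` by `W i j = [[0, -S i j], [S i j, 0]]` and summing over `i, j`
therefore gives exactly twice the block matrix `M`, a sum of positive semidefinite matrices.
-/

open Matrix
open scoped ComplexOrder

/-- The `(i,j)` block of a `2 × 2` block matrix with `n × n` blocks. -/
noncomputable def blk (n : ℕ) (A : Matrix (Fin 2 × Fin n) (Fin 2 × Fin n) ℂ) (i j : Fin 2) :
    Matrix (Fin n) (Fin n) ℂ :=
  Matrix.of fun r s => A (i, r) (j, s)

namespace Matrix

theorem fromBlocks_sum {ι l m n o α : Type*} [AddCommMonoid α] (s : Finset ι)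
    (A : ι → Matrix n l α) (B : ι → Matrix n m α) (C : ι → Matrix o l α) (D : ι → Matrix o m α) :
    ∑ x ∈ s, fromBlocks (A x) (B x) (C x) (D x) =
      fromBlocks (∑ x ∈ s, A x) (∑ x ∈ s, B x) (∑ x ∈ s, C x) (∑ x ∈ s, D x) := by
  ext (_ | _) (_ | _) <;> simp [sum_apply]

theorem conjTranspose_fromBlocks_antidiag_mul_mul {m n R : Type*} [Fintype m] [Fintype n]
    [Ring R] [StarRing R] (K : Matrix m n R) (A B C D : Matrix m m R) :
    (fromBlocks 0 (-K) K 0)ᴴ * fromBlocks A B C D * fromBlocks 0 (-K) K 0 =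
      fromBlocks (Kᴴ * D * K) (-(Kᴴ * C * K)) (-(Kᴴ * B * K)) (Kᴴ * A * K) := by
  simp [fromBlocks_conjTranspose, fromBlocks_multiply, Matrix.mul_assoc]

theorem PosSemidef.of_two_smul {m 𝕜 : Type*} [RCLike 𝕜] {M : Matrix m m 𝕜}
    (h : ((2 : 𝕜) • M).PosSemidef) : M.PosSemidef := by
  simpa [smul_smul] using h.smul (inv_nonneg.2 (zero_le_two : (0 : 𝕜) ≤ 2))

section symmSingle

variable {m R : Type*} [DecidableEq m]

def symmSingle [Semiring R] (i j : m) : Matrix m m R :=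
  single i j 1 + single j i 1

theorem symmSingle_conjTranspose [Semiring R] [StarRing R] (i j : m) :
    (symmSingle i j : Matrix m m R)ᴴ = symmSingle i j := by
  simp [symmSingle, add_comm]

variable [Fintype m]

theorem symmSingle_mul_mul_symmSingle [CommSemiring R] (B : Matrix m m R) (i j : m) :
    symmSingle i j * B * symmSingle i j =
      single i j (B j i) + single i i (B j j) + single j j (B i i) + single j i (B i j) := by
  simp only [symmSingle, add_mul, mul_add, single_mul_mul_single, one_mul, mul_one]
  abel

theorem sum_symmSingle_mul_transpose_mul_symmSingle [CommSemiring R] (B : Matrix m m R) :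
    ∑ i, ∑ j, symmSingle i j * Bᵀ * symmSingle i j = (2 : R) • (B.trace • 1 + B) := by
  have hdiag : ∑ i : m, ∑ j : m, single i i (B j j) = B.trace • (1 : Matrix m m R) := by
    rw [Finset.sum_comm]
    simp only [sum_single_eq_diagonal (fun _ => _), ← smul_one_eq_diagonal, ← Finset.sum_smul]
    rfl
  have hdiag' : ∑ i : m, ∑ j : m, single j j (B i i) = B.trace • (1 : Matrix m m R) := by
    rw [Finset.sum_comm, hdiag]
  have hoff : ∑ i : m, ∑ j : m, single i j (B i j) = B := (matrix_eq_sum_single B).symm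
  have hoff' : ∑ i : m, ∑ j : m, single j i (B j i) = B := by
    rw [Finset.sum_comm, hoff]
  simp only [symmSingle_mul_mul_symmSingle, Finset.sum_add_distrib, transpose_apply, hdiag,
    hdiag', hoff, hoff']
  rw [two_smul]
  abel

theorem PosSemidef.fromBlocks_swap_trace_smul_one_add {𝕜 : Type*} [RCLike 𝕜]
    {A B C D : Matrix m m 𝕜} (h : (fromBlocks A B C D).PosSemidef) :
    (fromBlocks (D.trace • 1 + D) (-B - B.trace • 1) (-C - C.trace • 1)
      (A.trace • 1 + A)).PosSemidef := by
  set W : m → m → Matrix (m ⊕ m) (m ⊕ m) 𝕜 := fun i j =>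
    fromBlocks 0 (-symmSingle i j) (symmSingle i j) 0
  have hsum : ∑ i, ∑ j, (W i j)ᴴ * (fromBlocks A B C D)ᵀ * W i j =
      (2 : 𝕜) • fromBlocks (D.trace • 1 + D) (-B - B.trace • 1) (-C - C.trace • 1)
        (A.trace • 1 + A) := by
    simp only [W, fromBlocks_transpose, conjTranspose_fromBlocks_antidiag_mul_mul,
      symmSingle_conjTranspose, fromBlocks_sum, Finset.sum_neg_distrib,
      sum_symmSingle_mul_transpose_mul_symmSingle, fromBlocks_smul]
    congr 1 <;> module
  refine PosSemidef.of_two_smul (hsum ▸ posSemidef_sum _ fun i _ => posSemidef_sum _ fun j _ => ?_)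
  exact h.transpose.conjTranspose_mul_mul_same (W i j)

end symmSingle

end Matrix

/-- If `A = [A_{i,j}]_{i,j=1}^2` is positive semidefinite, then the block matrix
`M = [[(tr A₂₂) Iₙ + A₂₂, −A₁₂ − (tr A₁₂) Iₙ], [−A₂₁ − (tr A₂₁) Iₙ, (tr A₁₁) Iₙ + A₁₁]]`
is positive semidefinite. -/
theorem stmt_8 (n : ℕ) (A : Matrix (Fin 2 × Fin n) (Fin 2 × Fin n) ℂ)
    (hA : A.PosSemidef) :
    (Matrix.fromBlocks
      ((blk n A 1 1).trace • (1 : Matrix (Fin n) (Fin n) ℂ) + blk n A 1 1)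
      (-(blk n A 0 1) - (blk n A 0 1).trace • (1 : Matrix (Fin n) (Fin n) ℂ))
      (-(blk n A 1 0) - (blk n A 1 0).trace • (1 : Matrix (Fin n) (Fin n) ℂ))
      ((blk n A 0 0).trace • (1 : Matrix (Fin n) (Fin n) ℂ) + blk n A 0 0)).PosSemidef := by
  have hblocks :
      fromBlocks (blk n A 0 0) (blk n A 0 1) (blk n A 1 0) (blk n A 1 1) =
        A.submatrix (Sum.elim (Prod.mk 0) (Prod.mk 1)) (Sum.elim (Prod.mk 0) (Prod.mk 1)) := by
    ext (_ | _) (_ | _) <;> rfl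
  exact (hblocks ▸ hA.submatrix _).fromBlocks_swap_trace_smul_one_add
end

section
/- Let A = [A_{i,j}]_{i,j=1}^m ∈ M_m(M_n) be positive semidefinite, and let Ã ∈ M_n(M_m) be its realignment, defined by Ã = [B_{r,s}]_{r,s=1}^n where B_{r,s} = [a^{i,j}_{r,s}]_{i,j=1}^m and a^{i,j}_{r,s} denotes the (r,s) entry of the block A_{i,j}. Then (tr A) I_{nm} − (tr₁ A) ⊗ I_m ≥ Ã − I_n ⊗ (tr₂ A). -/
/-!
Both sides are additive in `A`, and a positive semidefinite `A` is a sum of matrices `v v*`, so it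
suffices to treat `A = v v*`. Reshaping `v` into an `n × m` matrix `X` and a test vector into an
`m × n` matrix `C`, the quadratic form of the difference at `C` becomes
`‖X‖²‖C‖² - ‖CX‖² - |tr (CX)|² + ‖XC‖²` (Frobenius norms).

This is invariant under `C ↦ CU`, `X ↦ U*X` for unitary `U`, so the columns `c_r` of `C` may be
taken orthogonal. Then, with `x_r` the rows of `X`, `‖CX‖² = ∑ ‖c_r‖²‖x_r‖²`, and
`tr (CX) = ∑ β_r` where `β_r = (XC)_rr` satisfies `|β_r| ≤ ‖x_r‖‖c_r‖` and `∑ |β_r|² ≤ ‖XC‖²`.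
What remains compares the off-diagonal parts `(∑ t_r)² - ∑ t_r²` for `t_r = |β_r|` and
`t_r = ‖c_r‖‖x_r‖`: this expression is monotone in `t ≥ 0`, and the latter is at most
`(∑ ‖c_r‖²)(∑ ‖x_r‖²) - ∑ ‖c_r‖²‖x_r‖²` by Cauchy–Schwarz.
-/

open Matrix Kronecker
open scoped ComplexOrder

/-- The realignment `Ã ∈ Mₙ(Mₘ)` of `A ∈ Mₘ(Mₙ)`: the `(r,s)` block of `Ã`
is the `m × m` matrix `[a^{i,j}_{r,s}]_{i,j}`. -/
noncomputable def realign (m n : ℕ) (A : Matrix (Fin m × Fin n) (Fin m × Fin n) ℂ) :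
    Matrix (Fin n × Fin m) (Fin n × Fin m) ℂ :=
  Matrix.of fun p q => A (p.2, p.1) (q.2, q.1)

open Finset
open scoped Matrix.Norms.Frobenius

section OffDiagonal

variable {ι R : Type*} [Fintype ι] [CommRing R] [LinearOrder R] [IsStrictOrderedRing R]

theorem sq_sum_sub_sum_sq_le_of_le {s t : ι → R} (hs : 0 ≤ s) (hst : s ≤ t) :
    (∑ i, s i) ^ 2 - ∑ i, s i ^ 2 ≤ (∑ i, t i) ^ 2 - ∑ i, t i ^ 2 := by
  classical
  have offDiag_eq (u : ι → R) :
      (∑ i, u i) ^ 2 - ∑ i, u i ^ 2 = ∑ i, u i * ∑ j ∈ univ.erase i, u j := by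
    simp only [sum_erase_eq_sub (mem_univ _), mul_sub, sum_sub_distrib, ← sum_mul, sq]
  have ht : 0 ≤ t := hs.trans hst
  rw [offDiag_eq, offDiag_eq]
  gcongr with i _ j _
  exacts [sum_nonneg fun j _ => hs j, ht i, hst i, hst j]

theorem sq_sum_sub_sum_sq_le_of_le_mul {β u w : ι → R} (hβ : 0 ≤ β)
    (h : ∀ i, β i ≤ u i * w i) :
    (∑ i, β i) ^ 2 - ∑ i, β i ^ 2 ≤ (∑ i, u i ^ 2) * (∑ i, w i ^ 2) - ∑ i, (u i * w i) ^ 2 :=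
  (sq_sum_sub_sum_sq_le_of_le hβ h).trans <|
    sub_le_sub_right (sum_mul_sq_le_sq_mul_sq _ _ _) _

end OffDiagonal

namespace Matrix

section Quadratic

variable {R m n : Type*} [CommRing R] [StarRing R] [Fintype m] [Fintype n]

theorem star_vec_dotProduct_kronecker_mulVec_vec (P : Matrix n n R) (Q : Matrix m m R)
    (Y : Matrix m n R) :
    star (vec Y) ⬝ᵥ ((P ⊗ₖ Q) *ᵥ vec Y) = (Yᴴ * Q * Y * Pᵀ).trace := by
  rw [kronecker_mulVec_vec, star_vec_dotProduct_vec, Matrix.mul_assoc, Matrix.mul_assoc,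
    Matrix.mul_assoc]

theorem star_dotProduct_vecMulVec_mulVec (w x : n → R) :
    star x ⬝ᵥ (vecMulVec (star w) w *ᵥ x) = star (w ⬝ᵥ x) * (w ⬝ᵥ x) := by
  rw [vecMulVec_mulVec, dotProduct_smul, star_dotProduct_star, op_smul_eq_mul]

end Quadratic

theorem posSemidef_of_forall_dotProduct_mulVec_nonneg {n : Type*} [Fintype n]
    {M : Matrix n n ℂ} (h : ∀ x, 0 ≤ star x ⬝ᵥ (M *ᵥ x)) : M.PosSemidef := by
  classical
  rw [← isPositive_toEuclideanLin_iff, LinearMap.isPositive_iff_complex]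
  intro x
  set z := star x.ofLp ⬝ᵥ (M *ᵥ x.ofLp)
  obtain ⟨hre, him⟩ := Complex.nonneg_iff.mp (h x.ofLp)
  have hz : star z = z := Complex.conj_eq_iff_im.mpr him.symm
  have hinner : inner ℂ (M.toEuclideanLin x) x = star z := by
    simp [z, EuclideanSpace.inner_eq_star_dotProduct, dotProduct_comm, ← star_dotProduct_star]
  rw [hinner, hz, RCLike.re_to_complex]
  exact ⟨Complex.conj_eq_iff_re.mp hz, hre⟩

variable {𝕜 m n : Type*} [RCLike 𝕜] [Fintype m]

theorem conjTranspose_mul_self_apply_self (A : Matrix m n 𝕜) (j : n) :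
    (Aᴴ * A) j j = ((∑ i, ‖A i j‖ ^ 2 : ℝ) : 𝕜) := by
  simp [mul_apply, RCLike.conj_mul]

variable [Fintype n]

theorem frobenius_norm_sq {α : Type*} [SeminormedAddCommGroup α] (A : Matrix m n α) :
    ‖A‖ ^ 2 = ∑ i, ∑ j, ‖A i j‖ ^ 2 := by
  rw [frobenius_norm_def, ← Real.sqrt_eq_rpow, Real.sq_sqrt (by positivity)]
  simp_rw [Real.rpow_two]

theorem trace_conjTranspose_mul_self (A : Matrix m n 𝕜) :
    (Aᴴ * A).trace = ((‖A‖ ^ 2 : ℝ) : 𝕜) := by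
  simp only [trace, diag, conjTranspose_mul_self_apply_self, frobenius_norm_sq, RCLike.ofReal_sum]
  rw [sum_comm]

theorem frobenius_norm_mul_unitary [DecidableEq n] (A : Matrix m n 𝕜) {U : Matrix n n 𝕜}
    (hU : U ∈ unitaryGroup n 𝕜) : ‖A * U‖ = ‖A‖ := by
  have h : ((‖A * U‖ ^ 2 : ℝ) : 𝕜) = ((‖A‖ ^ 2 : ℝ) : 𝕜) := by
    rw [← trace_conjTranspose_mul_self, ← trace_conjTranspose_mul_self, conjTranspose_mul,
      Matrix.mul_assoc, trace_mul_comm, Matrix.mul_assoc, Matrix.mul_assoc,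
      ← star_eq_conjTranspose, mem_unitaryGroup_iff.mp hU, Matrix.mul_one]
  exact (pow_left_inj₀ (norm_nonneg _) (norm_nonneg _) two_ne_zero).mp (RCLike.ofReal_injective h)

theorem frobenius_norm_unitary_mul [DecidableEq m] (A : Matrix m n 𝕜) {U : Matrix m m 𝕜}
    (hU : U ∈ unitaryGroup m 𝕜) : ‖U * A‖ = ‖A‖ := by
  rw [← frobenius_norm_conjTranspose, conjTranspose_mul, ← star_eq_conjTranspose,
    frobenius_norm_mul_unitary _ (Unitary.star_mem hU), frobenius_norm_conjTranspose]

theorem frobenius_norm_mul_sq_of_isDiag {C : Matrix m n 𝕜} (hC : (Cᴴ * C).IsDiag)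
    (X : Matrix n m 𝕜) :
    ‖C * X‖ ^ 2 = ∑ r, (∑ k, ‖C k r‖ ^ 2) * ∑ k, ‖X r k‖ ^ 2 := by
  classical
  apply RCLike.ofReal_injective (K := 𝕜)
  have hXX (r : n) : (X * Xᴴ) r r = ((∑ k, ‖X r k‖ ^ 2 : ℝ) : 𝕜) := by
    simpa using conjTranspose_mul_self_apply_self Xᴴ r
  rw [← trace_conjTranspose_mul_self, conjTranspose_mul, Matrix.mul_assoc, ← Matrix.mul_assoc Cᴴ,
    trace_mul_comm, Matrix.mul_assoc, ← hC.diagonal_diag]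
  simp [trace, diagonal_mul, conjTranspose_mul_self_apply_self, hXX]

theorem frobenius_norm_mul_sq_add_norm_trace_sq_le_of_isDiag {C : Matrix m n 𝕜}
    (hC : (Cᴴ * C).IsDiag) (X : Matrix n m 𝕜) :
    ‖C * X‖ ^ 2 + ‖(C * X).trace‖ ^ 2 ≤ ‖C‖ ^ 2 * ‖X‖ ^ 2 + ‖X * C‖ ^ 2 := by
  set u : n → ℝ := fun r => √(∑ k, ‖C k r‖ ^ 2)
  set w : n → ℝ := fun r => √(∑ k, ‖X r k‖ ^ 2)
  set β : n → ℝ := fun r => ‖(X * C) r r‖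
  have hu (r : n) : u r ^ 2 = ∑ k, ‖C k r‖ ^ 2 := Real.sq_sqrt (by positivity)
  have hw (r : n) : w r ^ 2 = ∑ k, ‖X r k‖ ^ 2 := Real.sq_sqrt (by positivity)
  have hCX : ‖C * X‖ ^ 2 = ∑ r, (u r * w r) ^ 2 := by
    simp only [frobenius_norm_mul_sq_of_isDiag hC, mul_pow, hu, hw]
  have hC_norm : ‖C‖ ^ 2 = ∑ r, u r ^ 2 := by simp only [hu, frobenius_norm_sq]; exact sum_comm
  have hX_norm : ‖X‖ ^ 2 = ∑ r, w r ^ 2 := by simp only [hw, frobenius_norm_sq]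
  have hβ (r : n) : β r ≤ u r * w r := by
    calc β r ≤ ∑ k, ‖X r k‖ * ‖C k r‖ := by
          simp only [β, mul_apply, ← norm_mul]; exact norm_sum_le _ _
      _ ≤ w r * u r := Real.sum_mul_le_sqrt_mul_sqrt _ _ _
      _ = u r * w r := mul_comm _ _
  have htrace : ‖(C * X).trace‖ ≤ ∑ r, β r := by
    rw [trace_mul_comm]; exact norm_sum_le _ _
  have hXC : ∑ r, β r ^ 2 ≤ ‖X * C‖ ^ 2 := by
    rw [frobenius_norm_sq]
    exact sum_le_sum fun r _ =>
      single_le_sum (f := fun s => ‖(X * C) r s‖ ^ 2) (fun _ _ => by positivity) (mem_univ r)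
  have hoff := sq_sum_sub_sum_sq_le_of_le_mul (fun r => norm_nonneg _) hβ
  have htrace_sq : ‖(C * X).trace‖ ^ 2 ≤ (∑ r, β r) ^ 2 := by gcongr
  rw [hCX, hC_norm, hX_norm]
  linarith

theorem frobenius_norm_mul_sq_add_norm_trace_sq_le (C : Matrix m n 𝕜) (X : Matrix n m 𝕜) :
    ‖C * X‖ ^ 2 + ‖(C * X).trace‖ ^ 2 ≤ ‖C‖ ^ 2 * ‖X‖ ^ 2 + ‖X * C‖ ^ 2 := by
  classical
  have hH : (Cᴴ * C).IsHermitian := isHermitian_conjTranspose_mul_self C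
  set U : Matrix n n 𝕜 := (hH.eigenvectorUnitary : Matrix n n 𝕜)
  have hU : U ∈ unitaryGroup n 𝕜 := hH.eigenvectorUnitary.2
  have hUs : star U ∈ unitaryGroup n 𝕜 := Unitary.star_mem hU
  have hdiag : ((C * U)ᴴ * (C * U)).IsDiag := by
    have hconj := hH.conjStarAlgAut_star_eigenvectorUnitary
    rw [Unitary.conjStarAlgAut_star_apply] at hconj
    rw [conjTranspose_mul, Matrix.mul_assoc, ← Matrix.mul_assoc Cᴴ, ← star_eq_conjTranspose,
      ← Matrix.mul_assoc, hconj]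
    exact isDiag_diagonal _
  have key := frobenius_norm_mul_sq_add_norm_trace_sq_le_of_isDiag hdiag (star U * X)
  have hCX : C * U * (star U * X) = C * X := by
    rw [Matrix.mul_assoc, ← Matrix.mul_assoc U, mem_unitaryGroup_iff.mp hU, Matrix.one_mul]
  have hXC : star U * X * (C * U) = star U * (X * C) * U := by
    simp only [Matrix.mul_assoc]
  rwa [hCX, hXC, frobenius_norm_mul_unitary _ hU, frobenius_norm_unitary_mul _ hUs,
    frobenius_norm_mul_unitary _ hU, frobenius_norm_unitary_mul _ hUs] at key

end Matrix

noncomputable def realignGap (m n : ℕ) :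
    Matrix (Fin m × Fin n) (Fin m × Fin n) ℂ →+ Matrix (Fin n × Fin m) (Fin n × Fin m) ℂ :=
  AddMonoidHom.mk' (fun A => A.trace • (1 : Matrix (Fin n × Fin m) (Fin n × Fin m) ℂ)
      - ptrace1 m n A ⊗ₖ (1 : Matrix (Fin m) (Fin m) ℂ)
      - (realign m n A - (1 : Matrix (Fin n) (Fin n) ℂ) ⊗ₖ ptrace2 m n A)) fun A B => by
    ext p q
    simp only [trace_add, add_smul, ptrace1, ptrace2, realign, Matrix.add_apply, Matrix.sub_apply,
      Matrix.smul_apply, smul_eq_mul, sum_add_distrib, kroneckerMap_apply, of_apply]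
    ring

section RankOne

variable {m n : ℕ} (X : Matrix (Fin n) (Fin m) ℂ)

theorem ptrace1_vecMulVec : ptrace1 m n (vecMulVec (star (vec X)) (vec X)) = (X * Xᴴ)ᵀ := by
  ext r s
  simp [ptrace1, vecMulVec_apply, mul_apply, mul_comm]

theorem ptrace2_vecMulVec : ptrace2 m n (vecMulVec (star (vec X)) (vec X)) = Xᴴ * X := by
  ext i j
  simp [ptrace2, vecMulVec_apply, mul_apply]

theorem realign_vecMulVec :
    realign m n (vecMulVec (star (vec X)) (vec X)) = vecMulVec (star (vec Xᵀ)) (vec Xᵀ) := by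
  ext p q
  simp [realign, vecMulVec_apply]

theorem star_vec_dotProduct_realignGap_vecMulVec_mulVec (C : Matrix (Fin m) (Fin n) ℂ) :
    star (vec C) ⬝ᵥ (realignGap m n (vecMulVec (star (vec X)) (vec X)) *ᵥ vec C) =
      ((‖X‖ ^ 2 * ‖C‖ ^ 2 - ‖C * X‖ ^ 2 - ‖(C * X).trace‖ ^ 2 + ‖X * C‖ ^ 2 : ℝ) : ℂ) := by
  simp only [realignGap, AddMonoidHom.mk'_apply, sub_mulVec, smul_mulVec, one_mulVec,
    dotProduct_sub, dotProduct_smul, smul_eq_mul, ptrace1_vecMulVec, ptrace2_vecMulVec,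
    realign_vecMulVec, star_dotProduct_vecMulVec_mulVec, star_vec_dotProduct_kronecker_mulVec_vec,
    trace_vecMulVec, star_vec_dotProduct_vec, Matrix.mul_one, transpose_transpose, transpose_one]
  have hCX : (Cᴴ * C * (X * Xᴴ)).trace = ((C * X)ᴴ * (C * X)).trace := by
    rw [conjTranspose_mul, Matrix.mul_assoc Xᴴ, trace_mul_comm Xᴴ]
    simp only [Matrix.mul_assoc]
  have hXC : (Cᴴ * (Xᴴ * X) * C).trace = ((X * C)ᴴ * (X * C)).trace := by
    rw [conjTranspose_mul]
    simp only [Matrix.mul_assoc]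
  have htr : star (vec Xᵀ ⬝ᵥ vec C) * (vec Xᵀ ⬝ᵥ vec C) = ((‖(C * X).trace‖ ^ 2 : ℝ) : ℂ) := by
    rw [vec_dotProduct_vec, transpose_transpose, trace_mul_comm]
    exact_mod_cast Complex.conj_mul' _
  rw [hCX, hXC, htr]
  simp only [trace_conjTranspose_mul_self, RCLike.ofReal_eq_complex_ofReal]
  push_cast
  ring

end RankOne

theorem posSemidef_realignGap_vecMulVec {m n : ℕ} (v : Fin m × Fin n → ℂ) :
    (realignGap m n (vecMulVec v (star v))).PosSemidef := by
  obtain ⟨X, hX⟩ := vec_bijective.surjective (star v)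
  obtain rfl : v = star (vec X) := by rw [hX, star_star]
  rw [star_star]
  refine posSemidef_of_forall_dotProduct_mulVec_nonneg fun x => ?_
  obtain ⟨C, rfl⟩ := vec_bijective.surjective x
  rw [star_vec_dotProduct_realignGap_vecMulVec_mulVec, Complex.zero_le_real]
  linarith [frobenius_norm_mul_sq_add_norm_trace_sq_le C X]

/-- If `A` is positive semidefinite, then
`(tr A) I_{nm} − (tr₁ A) ⊗ Iₘ ≥ Ã − Iₙ ⊗ (tr₂ A)`. -/
theorem stmt_10 (m n : ℕ) (A : Matrix (Fin m × Fin n) (Fin m × Fin n) ℂ)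
    (hA : A.PosSemidef) :
    (A.trace • (1 : Matrix (Fin n × Fin m) (Fin n × Fin m) ℂ)
      - ptrace1 m n A ⊗ₖ (1 : Matrix (Fin m) (Fin m) ℂ)
      - (realign m n A - (1 : Matrix (Fin n) (Fin n) ℂ) ⊗ₖ ptrace2 m n A)).PosSemidef := by
  show (realignGap m n A).PosSemidef
  obtain ⟨k, v, rfl⟩ := posSemidef_iff_eq_sum_vecMulVec.mp hA
  rw [map_sum]
  exact posSemidef_sum _ fun i _ => posSemidef_realignGap_vecMulVec (v i)
end

section
/- Let A = [A_{i,j}]_{i,j=1}^m ∈ M_m(M_n) be positive semidefinite. Then (tr A) I_{mn} + (tr₂ A) ⊗ I_n ≥ A + I_m ⊗ (tr₁ A). (Note: no PPT assumption is required, only positive semidefiniteness.) -/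
open Matrix Kronecker
open scoped ComplexOrder

/-!
The left-hand side is `(Φ ⊗ Ψ) A` for `Φ X = tr X · I + X` and `Ψ Y = tr Y · I - Y`. Both become
completely positive after a transpose: with `S_{kl} = E_{kl} + E_{lk}` and `T_{rs} = E_{rs} - E_{sr}`,
`∑ S_{kl} Xᵀ S_{kl}ᴴ = 2 Φ X` and `∑ T_{rs} Yᵀ T_{rs}ᴴ = 2 Ψ Y`. Hence the left-hand side equals
`¼ ∑ (S_{kl} ⊗ T_{rs}) Aᵀ (S_{kl} ⊗ T_{rs})ᴴ`, which is positive semidefinite since `Aᵀ` is.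
-/

section KrausSum

variable {R m n ι κ : Type*} [CommRing R] [StarRing R] [Fintype m] [Fintype n]

theorem kronecker_mul_mul_conjTranspose_apply (S : Matrix m m R) (T : Matrix n n R)
    (B : Matrix (m × n) (m × n) R) (x y : m × n) :
    ((S ⊗ₖ T) * B * (S ⊗ₖ T)ᴴ) x y =
      ∑ c, ∑ d, S x.1 c.1 * star (S y.1 d.1) * (T x.2 c.2 * star (T y.2 d.2)) * B c d := by
  simp only [mul_apply, conjTranspose_apply, kroneckerMap_apply, star_mul', Finset.sum_mul]
  rw [Finset.sum_comm]
  exact Finset.sum_congr rfl fun c _ => Finset.sum_congr rfl fun d _ => by ring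

theorem sum_kronecker_mul_mul_conjTranspose_apply [Fintype ι] [Fintype κ]
    (S : ι → Matrix m m R) (T : κ → Matrix n n R) (B : Matrix (m × n) (m × n) R) (x y : m × n) :
    (∑ a, ∑ b, (S a ⊗ₖ T b) * B * (S a ⊗ₖ T b)ᴴ) x y =
      ∑ c, ∑ d, (∑ a, S a x.1 c.1 * star (S a y.1 d.1)) *
        (∑ b, T b x.2 c.2 * star (T b y.2 d.2)) * B c d := by
  simp only [Matrix.sum_apply, kronecker_mul_mul_conjTranspose_apply, Finset.sum_mul,
    Finset.mul_sum]
  simp_rw [Finset.sum_comm (s := (Finset.univ : Finset ι)),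
    Finset.sum_comm (s := (Finset.univ : Finset κ))]

variable [DecidableEq m]

def symmUnit (k l : m) : Matrix m m R := single k l 1 + single l k 1

def skewUnit (k l : m) : Matrix m m R := single k l 1 - single l k 1

theorem sum_symmUnit_mul_star_symmUnit (x y u v : m) :
    ∑ a : m × m, symmUnit a.1 a.2 x y * star (symmUnit a.1 a.2 u v : R) =
      2 * ((if x = u ∧ y = v then 1 else 0) + (if x = v ∧ y = u then 1 else 0)) := by
  simp [symmUnit, single_apply, Fintype.sum_prod_type, apply_ite star, mul_add, ite_and,
    Finset.sum_ite_eq', Finset.sum_add_distrib]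
  grind

theorem sum_skewUnit_mul_star_skewUnit (x y u v : m) :
    ∑ a : m × m, skewUnit a.1 a.2 x y * star (skewUnit a.1 a.2 u v : R) =
      2 * ((if x = u ∧ y = v then 1 else 0) - (if x = v ∧ y = u then 1 else 0)) := by
  simp [skewUnit, single_apply, Fintype.sum_prod_type, apply_ite star, mul_sub, ite_and,
    Finset.sum_ite_eq']
  grind

end KrausSum

theorem trace_smul_one_add_ptrace2_sub_eq_kraus_sum (m n : ℕ)
    (A : Matrix (Fin m × Fin n) (Fin m × Fin n) ℂ) :
    A.trace • (1 : Matrix (Fin m × Fin n) (Fin m × Fin n) ℂ)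
      + ptrace2 m n A ⊗ₖ (1 : Matrix (Fin n) (Fin n) ℂ)
      - (A + (1 : Matrix (Fin m) (Fin m) ℂ) ⊗ₖ ptrace1 m n A) =
    (4 : ℂ)⁻¹ • ∑ a : Fin m × Fin m, ∑ b : Fin n × Fin n,
      (symmUnit a.1 a.2 ⊗ₖ skewUnit b.1 b.2) * Aᵀ * (symmUnit a.1 a.2 ⊗ₖ skewUnit b.1 b.2)ᴴ := by
  ext ⟨i, p⟩ ⟨j, q⟩
  rw [Matrix.smul_apply, sum_kronecker_mul_mul_conjTranspose_apply]
  simp only [sum_symmUnit_mul_star_symmUnit, sum_skewUnit_mul_star_skewUnit, transpose_apply]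
  simp only [trace, diag_apply, Fintype.sum_prod_type, ptrace2, ptrace1, Matrix.sub_apply,
    Matrix.add_apply, Matrix.smul_apply, one_apply, Prod.mk.injEq, ite_and, smul_eq_mul, mul_ite,
    mul_one, mul_zero, kroneckerMap_apply, of_apply, Finset.mul_sum, ite_mul, one_mul, zero_mul,
    Finset.sum_ite_irrel, Finset.sum_const_zero, mul_add, mul_sub, add_mul, sub_mul,
    Finset.sum_sub_distrib, Finset.sum_ite_eq, Finset.sum_ite_eq', Finset.mem_univ,
    if_true, Finset.sum_add_distrib]
  have quarter (z : ℂ) : 4⁻¹ * (2 * 2 * z) = z := by ring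
  simp only [quarter]
  split_ifs <;> ring

/-- If `A` is positive semidefinite (no PPT assumption needed), then
`(tr A) I_{mn} + (tr₂ A) ⊗ Iₙ ≥ A + Iₘ ⊗ (tr₁ A)`. -/
theorem stmt_12 (m n : ℕ) (A : Matrix (Fin m × Fin n) (Fin m × Fin n) ℂ)
    (hA : A.PosSemidef) :
    (A.trace • (1 : Matrix (Fin m × Fin n) (Fin m × Fin n) ℂ)
      + ptrace2 m n A ⊗ₖ (1 : Matrix (Fin n) (Fin n) ℂ)
      - (A + (1 : Matrix (Fin m) (Fin m) ℂ) ⊗ₖ ptrace1 m n A)).PosSemidef := by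
  rw [trace_smul_one_add_ptrace2_sub_eq_kraus_sum]
  refine PosSemidef.smul ?_ (by positivity)
  exact posSemidef_sum _ fun a _ => posSemidef_sum _ fun b _ =>
    hA.transpose.mul_mul_conjTranspose_same _
end

section
/- Let A = [A_{i,j}]_{i,j=1}^m ∈ M_m(M_n) be positive semidefinite. Then (tr A) I_{mn} − A ≥ I_m ⊗ (tr₁ A) − (tr₂ A) ⊗ I_n and (tr A) I_{mn} − A ≥ (tr₂ A) ⊗ I_n − I_m ⊗ (tr₁ A). -/
open Matrix Kronecker
open scoped ComplexOrder

/-!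
Both sides are additive in `A`, and a positive semidefinite `A` is a sum of rank-one matrices
`x xᴴ`, so it suffices to treat `A = x xᴴ`. There the quadratic form of the first difference at a
vector `y` is a sum of four quartic expressions in `x, y`; averaging it over the symmetries
`(i, r, j, s) ↦ (j, s, i, r)` and `(i, r, j, s) ↦ (i, s, j, r)` of the index set turns it into
`¼ ∑ |x_{ir} y_{js} - x_{js} y_{ir} - x_{is} y_{jr} + x_{jr} y_{is}|²`.
Swapping the two tensor factors exchanges `tr₁` and `tr₂`, which turns the first inequality into
the second.
-/

theorem Fintype.sum_sum_swap_snd {ι κ M : Type*} [Fintype ι] [Fintype κ] [AddCommMonoid M]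
    (f : ι × κ → ι × κ → M) :
    ∑ p : ι × κ, ∑ q : ι × κ, f (p.1, q.2) (q.1, p.2) = ∑ p, ∑ q, f p q := by
  let e : Equiv.Perm ((ι × κ) × (ι × κ)) :=
    Function.Involutive.toPerm (fun x => ((x.1.1, x.2.2), (x.2.1, x.1.2))) fun _ => rfl
  simp only [← Fintype.sum_prod_type']
  exact Equiv.sum_comp e fun x : (ι × κ) × (ι × κ) => f x.1 x.2

/-- With `U, V` the `ι × κ` matrices of `u, v`, this reads
`‖U‖² ‖V‖² - |⟪V, U⟫|² ≥ ‖U Vᴴ‖² - ‖Vᴴ U‖²` (Frobenius norms). -/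
theorem cauchySchwarz_gap_sub_nonneg {ι κ : Type*} [Fintype ι] [Fintype κ]
    (u v : ι × κ → ℂ) :
    0 ≤ ∑ p, ∑ q, star (u p) * u p * (star (v q) * v q)
      - ∑ p, ∑ q, star (v p) * u p * (star (u q) * v q)
      - (∑ p, ∑ q, star (v p) * u (q.1, p.2) * (star (u q) * v (p.1, q.2))
        - ∑ p, ∑ q, star (v p) * u (p.1, q.2) * (star (u q) * v (q.1, p.2))) := by
  set F : ι × κ → ι × κ → ℂ := fun p q => star (u p) * u p * (star (v q) * v q)
      - star (v p) * u p * (star (u q) * v q)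
      - (star (v p) * u (q.1, p.2) * (star (u q) * v (p.1, q.2))
        - star (v p) * u (p.1, q.2) * (star (u q) * v (q.1, p.2))) with hF
  set E : ι × κ → ι × κ → ℂ := fun p q => u p * v q - u q * v p
      - u (p.1, q.2) * v (q.1, p.2) + u (q.1, p.2) * v (p.1, q.2) with hE
  have hsym : 4 * ∑ p, ∑ q, F p q = ∑ p, ∑ q, star (E p q) * E p q := calc
    4 * ∑ p, ∑ q, F p q = ∑ p, ∑ q, (F p q + F q p + F (p.1, q.2) (q.1, p.2)
        + F (q.1, p.2) (p.1, q.2)) := by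
      simp only [Finset.sum_add_distrib, Fintype.sum_sum_swap_snd F,
        Fintype.sum_sum_swap_snd fun p q => F q p, Finset.sum_comm (f := fun p q => F q p)]
      ring
    _ = ∑ p, ∑ q, star (E p q) * E p q := by
      congr! 2 with p _ q
      simp only [hF, hE, star_add, star_sub, star_mul']
      ring
  have hF_eq : ∑ p, ∑ q, F p q = 4⁻¹ * ∑ p, ∑ q, star (E p q) * E p q := by
    rw [← hsym]; ring
  simp only [← Finset.sum_sub_distrib]
  rw [hF_eq]
  exact mul_nonneg (by positivity)
    (Finset.sum_nonneg fun p _ => Finset.sum_nonneg fun q _ => star_mul_self_nonneg _)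

namespace Matrix

/-- Unlike `PosSemidef.of_dotProduct_mulVec_nonneg`, no hermiticity is assumed: over `ℂ` it
follows from the quadratic form being real, by polarization. -/
theorem posSemidef_of_forall_star_dotProduct_mulVec_nonneg {N : Type*} [Fintype N]
    [DecidableEq N] {M : Matrix N N ℂ} (h : ∀ x, 0 ≤ star x ⬝ᵥ (M *ᵥ x)) : M.PosSemidef := by
  rw [← isPositive_toEuclideanLin_iff, LinearMap.isPositive_iff_complex]
  intro x
  have hx := h x.ofLp
  have hstar : x.ofLp ⬝ᵥ star (M *ᵥ x.ofLp) = star x.ofLp ⬝ᵥ (M *ᵥ x.ofLp) := by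
    rw [← (IsSelfAdjoint.of_nonneg hx).star_eq, star_dotProduct, star_star, dotProduct_comm]
  simp only [EuclideanSpace.inner_eq_star_dotProduct, ofLp_toLpLin, toLin'_apply, hstar,
    RCLike.re_to_complex]
  exact ⟨Complex.ext rfl (Complex.nonneg_iff.mp hx).2, (Complex.nonneg_iff.mp hx).1⟩

theorem star_dotProduct_mulVec_eq_sum_sum {N R : Type*} [Fintype N] [NonUnitalSemiring R]
    [Star R] (M : Matrix N N R) (y : N → R) :
    star y ⬝ᵥ (M *ᵥ y) = ∑ p, ∑ q, star (y p) * M p q * y q := by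
  simp [dotProduct, mulVec, Finset.mul_sum, mul_assoc]

theorem trace_submatrix_equiv {N N' R : Type*} [Fintype N] [Fintype N'] [AddCommMonoid R]
    (A : Matrix N N R) (e : N' ≃ N) : (A.submatrix e e).trace = A.trace :=
  Fintype.sum_equiv e _ _ fun _ => rfl

theorem kronecker_submatrix_prodComm {α α' β β' R : Type*} [CommMagma R]
    (B : Matrix α α' R) (C : Matrix β β' R) :
    (B ⊗ₖ C).submatrix (Equiv.prodComm β α) (Equiv.prodComm β' α') = C ⊗ₖ B := by
  ext
  simp [mul_comm]

section RankOne

variable {N R : Type*} [Fintype N] [CommSemiring R] [StarRing R] (x y : N → R)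

theorem star_dotProduct_trace_vecMulVec_smul_one_mulVec [DecidableEq N] :
    star y ⬝ᵥ (((vecMulVec x (star x)).trace • (1 : Matrix N N R)) *ᵥ y)
      = ∑ p, ∑ q, star (x p) * x p * (star (y q) * y q) := by
  rw [smul_mulVec, one_mulVec, dotProduct_smul, smul_eq_mul]
  simp [trace, vecMulVec_apply, dotProduct, Finset.sum_mul_sum, mul_comm]

theorem star_dotProduct_vecMulVec_mulVec_s13 :
    star y ⬝ᵥ (vecMulVec x (star x) *ᵥ y)
      = ∑ p, ∑ q, star (y p) * x p * (star (x q) * y q) := by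
  simp [star_dotProduct_mulVec_eq_sum_sum, vecMulVec_apply, mul_assoc]

end RankOne

end Matrix

section PartialTrace

variable {m n : ℕ}

theorem ptrace1_submatrix_prodComm (A : Matrix (Fin m × Fin n) (Fin m × Fin n) ℂ) :
    ptrace1 n m (A.submatrix (Equiv.prodComm _ _) (Equiv.prodComm _ _)) = ptrace2 m n A :=
  rfl

theorem ptrace2_submatrix_prodComm (A : Matrix (Fin m × Fin n) (Fin m × Fin n) ℂ) :
    ptrace2 n m (A.submatrix (Equiv.prodComm _ _) (Equiv.prodComm _ _)) = ptrace1 m n A :=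
  rfl

theorem star_dotProduct_one_kronecker_ptrace1_vecMulVec_mulVec (x y : Fin m × Fin n → ℂ) :
    star y ⬝ᵥ ((1 ⊗ₖ ptrace1 m n (vecMulVec x (star x))) *ᵥ y)
      = ∑ p, ∑ q, star (y p) * x (q.1, p.2) * (star (x q) * y (p.1, q.2)) := by
  rw [star_dotProduct_mulVec_eq_sum_sum]
  refine Finset.sum_congr rfl fun p _ => ?_
  simp only [RCLike.star_def, ptrace1, vecMulVec_apply, Pi.star_apply, kroneckerMap_apply,
    one_apply, of_apply, Finset.mul_sum, ite_mul, one_mul, zero_mul, Finset.sum_ite_irrel,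
    Finset.sum_const_zero, mul_ite, mul_zero, Finset.sum_mul, Fintype.sum_prod_type,
    Finset.sum_ite_eq, Finset.mem_univ, ↓reduceIte]
  exact Finset.sum_comm.trans
    (Finset.sum_congr rfl fun _ _ => Finset.sum_congr rfl fun _ _ => by ring)

theorem star_dotProduct_ptrace2_vecMulVec_kronecker_one_mulVec (x y : Fin m × Fin n → ℂ) :
    star y ⬝ᵥ ((ptrace2 m n (vecMulVec x (star x)) ⊗ₖ 1) *ᵥ y)
      = ∑ p, ∑ q, star (y p) * x (p.1, q.2) * (star (x q) * y (q.1, p.2)) := by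
  rw [star_dotProduct_mulVec_eq_sum_sum]
  refine Finset.sum_congr rfl fun p _ => ?_
  simp [Fintype.sum_prod_type, one_apply, ptrace2, vecMulVec_apply, Finset.mul_sum,
    Finset.sum_mul, mul_assoc]

noncomputable def traceGap (m n : ℕ) :
    Matrix (Fin m × Fin n) (Fin m × Fin n) ℂ →+ Matrix (Fin m × Fin n) (Fin m × Fin n) ℂ :=
  AddMonoidHom.mk' (fun A => A.trace • 1 - A - (1 ⊗ₖ ptrace1 m n A - ptrace2 m n A ⊗ₖ 1))
    fun A B => by
      simp only [trace_add, ptrace1_add, ptrace2_add, add_smul, kronecker_add, add_kronecker]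
      abel

theorem traceGap_apply (A : Matrix (Fin m × Fin n) (Fin m × Fin n) ℂ) :
    traceGap m n A = A.trace • 1 - A - (1 ⊗ₖ ptrace1 m n A - ptrace2 m n A ⊗ₖ 1) :=
  rfl

theorem posSemidef_traceGap_vecMulVec (x : Fin m × Fin n → ℂ) :
    (traceGap m n (vecMulVec x (star x))).PosSemidef := by
  refine posSemidef_of_forall_star_dotProduct_mulVec_nonneg fun y => ?_
  rw [traceGap_apply, sub_mulVec, sub_mulVec, sub_mulVec, dotProduct_sub, dotProduct_sub,
    dotProduct_sub, star_dotProduct_trace_vecMulVec_smul_one_mulVec,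
    star_dotProduct_vecMulVec_mulVec_s13, star_dotProduct_one_kronecker_ptrace1_vecMulVec_mulVec,
    star_dotProduct_ptrace2_vecMulVec_kronecker_one_mulVec]
  exact cauchySchwarz_gap_sub_nonneg x y

theorem Matrix.PosSemidef.traceGap {A : Matrix (Fin m × Fin n) (Fin m × Fin n) ℂ}
    (hA : A.PosSemidef) : (traceGap m n A).PosSemidef := by
  obtain ⟨r, v, rfl⟩ := posSemidef_iff_eq_sum_vecMulVec.mp hA
  rw [map_sum]
  exact posSemidef_sum _ fun k _ => posSemidef_traceGap_vecMulVec (v k)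

end PartialTrace

/-- If `A` is positive semidefinite, then
`(tr A) I_{mn} − A ≥ ± (Iₘ ⊗ (tr₁ A) − (tr₂ A) ⊗ Iₙ)`. -/
theorem stmt_13 (m n : ℕ) (A : Matrix (Fin m × Fin n) (Fin m × Fin n) ℂ)
    (hA : A.PosSemidef) :
    (A.trace • (1 : Matrix (Fin m × Fin n) (Fin m × Fin n) ℂ) - A
      - ((1 : Matrix (Fin m) (Fin m) ℂ) ⊗ₖ ptrace1 m n A
        - ptrace2 m n A ⊗ₖ (1 : Matrix (Fin n) (Fin n) ℂ))).PosSemidef ∧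
    (A.trace • (1 : Matrix (Fin m × Fin n) (Fin m × Fin n) ℂ) - A
      - (ptrace2 m n A ⊗ₖ (1 : Matrix (Fin n) (Fin n) ℂ)
        - (1 : Matrix (Fin m) (Fin m) ℂ) ⊗ₖ ptrace1 m n A)).PosSemidef := by
  refine ⟨hA.traceGap, ?_⟩
  have hswap := (hA.submatrix (Equiv.prodComm (Fin n) (Fin m))).traceGap
  rw [← posSemidef_submatrix_equiv (Equiv.prodComm (Fin n) (Fin m)).symm, traceGap_apply,
    ptrace1_submatrix_prodComm, ptrace2_submatrix_prodComm, trace_submatrix_equiv] at hswap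
  simp only [submatrix_sub, submatrix_smul, Pi.sub_apply, Pi.smul_apply, submatrix_one_equiv,
    submatrix_submatrix, Equiv.self_comp_symm, submatrix_id_id] at hswap
  rwa [Equiv.prodComm_symm, kronecker_submatrix_prodComm, kronecker_submatrix_prodComm] at hswap
end

section
/- Let X = (x_{ij}) be a real m×n matrix. Then mn · ∑_{i=1}^m ∑_{j=1}^n x_{ij}² − n · ∑_{j=1}^n (∑_{i=1}^m x_{ij})² ≥ | m · ∑_{i=1}^m (∑_{j=1}^n x_{ij})² − (∑_{i=1}^m ∑_{j=1}^n x_{ij})² |. -/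
/-!
By Lagrange's identity `#s ∑ fᵢ² - (∑ fᵢ)² = ½ ∑ᵢ ∑ₖ (fᵢ - fₖ)²`, applied once to every column
and once to the vector of row sums, twice the left side is `∑ᵢ ∑ₖ n ∑ⱼ (xᵢⱼ - xₖⱼ)²` and twice the
quantity inside the absolute value is `∑ᵢ ∑ₖ (∑ⱼ (xᵢⱼ - xₖⱼ))²`. The latter is nonnegative and is
bounded by the former term by term, by Cauchy–Schwarz for the row differences `xᵢ - xₖ`.
-/

open Finset

namespace Finset

variable {ι κ R : Type*}

theorem sum_sum_sub_sq [CommRing R] (s : Finset ι) (f : ι → R) :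
    ∑ i ∈ s, ∑ k ∈ s, (f i - f k) ^ 2 = 2 * (#s * ∑ i ∈ s, f i ^ 2 - (∑ i ∈ s, f i) ^ 2) := by
  simp only [sub_sq, sum_add_distrib, sum_sub_distrib, sum_const, nsmul_eq_mul, ← mul_sum,
    ← sum_mul]
  ring

section Matrix

variable [CommRing R] (s : Finset ι) (t : Finset κ) (x : ι → κ → R)

theorem sum_sum_card_mul_sum_sub_sq :
    ∑ i ∈ s, ∑ k ∈ s, (#t : R) * ∑ j ∈ t, (x i j - x k j) ^ 2 =
      2 * (#s * #t * ∑ i ∈ s, ∑ j ∈ t, x i j ^ 2 - #t * ∑ j ∈ t, (∑ i ∈ s, x i j) ^ 2) := by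
  simp only [← mul_sum]
  rw [sum_comm_cycle, sum_congr rfl fun j _ ↦ sum_sum_sub_sq s (x · j), ← mul_sum,
    sum_sub_distrib, ← mul_sum, sum_comm (s := s)]
  ring

theorem sum_sum_sq_sum_sub :
    ∑ i ∈ s, ∑ k ∈ s, (∑ j ∈ t, (x i j - x k j)) ^ 2 =
      2 * (#s * ∑ i ∈ s, (∑ j ∈ t, x i j) ^ 2 - (∑ i ∈ s, ∑ j ∈ t, x i j) ^ 2) := by
  simp only [sum_sub_distrib]
  exact sum_sum_sub_sq s (fun i ↦ ∑ j ∈ t, x i j)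

theorem abs_card_mul_sum_sq_sum_sub_sq_sum_le [LinearOrder R] [IsStrictOrderedRing R] :
    |#s * ∑ i ∈ s, (∑ j ∈ t, x i j) ^ 2 - (∑ i ∈ s, ∑ j ∈ t, x i j) ^ 2| ≤
      #s * #t * ∑ i ∈ s, ∑ j ∈ t, x i j ^ 2 - #t * ∑ j ∈ t, (∑ i ∈ s, x i j) ^ 2 := by
  rw [abs_of_nonneg (sub_nonneg.2 sq_sum_le_card_mul_sum_sq)]
  have row_differences :
      ∑ i ∈ s, ∑ k ∈ s, (∑ j ∈ t, (x i j - x k j)) ^ 2 ≤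
        ∑ i ∈ s, ∑ k ∈ s, (#t : R) * ∑ j ∈ t, (x i j - x k j) ^ 2 :=
    sum_le_sum fun _ _ ↦ sum_le_sum fun _ _ ↦ sq_sum_le_card_mul_sum_sq
  rw [sum_sum_sq_sum_sub, sum_sum_card_mul_sum_sub_sq] at row_differences
  linarith

end Matrix

end Finset

/-- Generalized Cauchy–Khinchin inequality: for a real `m × n` matrix `X = (xᵢⱼ)`,
`mn ∑ᵢⱼ xᵢⱼ² − n ∑ⱼ (∑ᵢ xᵢⱼ)² ≥ |m ∑ᵢ (∑ⱼ xᵢⱼ)² − (∑ᵢⱼ xᵢⱼ)²|`. -/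
theorem stmt_14 (m n : ℕ) (x : Fin m → Fin n → ℝ) :
    (m : ℝ) * n * (∑ i, ∑ j, x i j ^ 2) - n * ∑ j, (∑ i, x i j) ^ 2 ≥
      |(m : ℝ) * ∑ i, (∑ j, x i j) ^ 2 - (∑ i, ∑ j, x i j) ^ 2| := by
  simpa using abs_card_mul_sum_sq_sum_sub_sq_sum_le univ univ x
end

section
/- For any positive integers m and n, the (mn)×(mn) real matrices J_m ⊗ J_n, m n I_{mn} − n (J_m ⊗ I_n) − m (I_m ⊗ J_n) + J_m ⊗ J_n, and m n I_{mn} − n (J_m ⊗ I_n) + m (I_m ⊗ J_n) − J_m ⊗ J_n are all positive semidefinite, where J_k is the k×k all-ones matrix. (This is the specialization A = J_m ⊗ J_n of the main inequality, used to derive the generalized Cauchy–Khinchin inequalities.) -/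
open Matrix Kronecker

/-!
Both non-trivial matrices factor as Kronecker products,
`(m I − Jₘ) ⊗ (n I − Jₙ)` and `(m I − Jₘ) ⊗ (n I + Jₙ)`, and Kronecker products of positive
semidefinite matrices are positive semidefinite. The factor `k I − Jₖ` is positive semidefinite by
Cauchy–Schwarz, `(∑ xᵢ)² ≤ k ∑ xᵢ²`, and `Jₖ = 𝟙 𝟙ᵀ` is a Gram matrix.
-/

/-- The `k × k` all-ones real matrix. -/
def allOnes (k : ℕ) : Matrix (Fin k) (Fin k) ℝ :=
  Matrix.of fun _ _ => 1

namespace Matrix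

variable {R l m n p : Type*} [NonUnitalNonAssocRing R]

theorem sub_kronecker (A₁ A₂ : Matrix l m R) (B : Matrix n p R) :
    (A₁ - A₂) ⊗ₖ B = A₁ ⊗ₖ B - A₂ ⊗ₖ B := by
  ext; simp [sub_mul]

theorem kronecker_sub (A : Matrix l m R) (B₁ B₂ : Matrix n p R) :
    A ⊗ₖ (B₁ - B₂) = A ⊗ₖ B₁ - A ⊗ₖ B₂ := by
  ext; simp [mul_sub]

end Matrix

section KroneckerExpansion

variable {R l n : Type*} [CommRing R] [DecidableEq l] [DecidableEq n]

theorem smul_one_sub_kronecker_smul_one_sub (a b : R) (A : Matrix l l R) (B : Matrix n n R) :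
    (a • 1 - A) ⊗ₖ (b • 1 - B) = (a * b) • 1 - b • (A ⊗ₖ 1) - a • (1 ⊗ₖ B) + A ⊗ₖ B := by
  simp only [sub_kronecker, kronecker_sub, smul_kronecker, kronecker_smul, one_kronecker_one]
  module

theorem smul_one_sub_kronecker_smul_one_add (a b : R) (A : Matrix l l R) (B : Matrix n n R) :
    (a • 1 - A) ⊗ₖ (b • 1 + B) = (a * b) • 1 - b • (A ⊗ₖ 1) + a • (1 ⊗ₖ B) - A ⊗ₖ B := by
  simp only [sub_kronecker, kronecker_add, smul_kronecker, kronecker_smul, one_kronecker_one]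
  module

end KroneckerExpansion

theorem allOnes_eq_vecMulVec (k : ℕ) : allOnes k = vecMulVec 1 1 := by
  ext; simp [allOnes, vecMulVec_apply]

theorem posSemidef_allOnes (k : ℕ) : (allOnes k).PosSemidef := by
  simpa [allOnes_eq_vecMulVec] using posSemidef_vecMulVec_self_star (1 : Fin k → ℝ)

theorem posSemidef_smul_one_add_allOnes {c : ℝ} (hc : 0 ≤ c) (k : ℕ) :
    (c • 1 + allOnes k).PosSemidef :=
  (PosSemidef.one.smul hc).add (posSemidef_allOnes k)

theorem posSemidef_card_smul_one_sub_allOnes (k : ℕ) :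
    ((k : ℝ) • 1 - allOnes k).PosSemidef := by
  refine .of_dotProduct_mulVec_nonneg ?_ fun x => ?_
  · exact (isHermitian_one.smul (by simp)).sub (posSemidef_allOnes k).isHermitian
  · have cauchySchwarz := sq_sum_le_card_mul_sum_sq (s := Finset.univ) (f := x)
    simp only [Finset.card_univ, Fintype.card_fin] at cauchySchwarz
    have quadForm_allOnes : x ⬝ᵥ allOnes k *ᵥ x = (∑ i, x i) ^ 2 := by
      simp [allOnes, mulVec, dotProduct, Finset.sum_mul, sq]
    rw [star_trivial, sub_mulVec, dotProduct_sub, quadForm_allOnes, smul_mulVec, one_mulVec,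
      dotProduct_smul, smul_eq_mul]
    simpa [dotProduct, sq] using cauchySchwarz

theorem stmt_16_general (m n : ℕ) :
    (allOnes m ⊗ₖ allOnes n).PosSemidef ∧
    (((m : ℝ) * n) • (1 : Matrix (Fin m × Fin n) (Fin m × Fin n) ℝ)
      - (n : ℝ) • (allOnes m ⊗ₖ (1 : Matrix (Fin n) (Fin n) ℝ))
      - (m : ℝ) • ((1 : Matrix (Fin m) (Fin m) ℝ) ⊗ₖ allOnes n)
      + allOnes m ⊗ₖ allOnes n).PosSemidef ∧
    (((m : ℝ) * n) • (1 : Matrix (Fin m × Fin n) (Fin m × Fin n) ℝ)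
      - (n : ℝ) • (allOnes m ⊗ₖ (1 : Matrix (Fin n) (Fin n) ℝ))
      + (m : ℝ) • ((1 : Matrix (Fin m) (Fin m) ℝ) ⊗ₖ allOnes n)
      - allOnes m ⊗ₖ allOnes n).PosSemidef := by
  refine ⟨(posSemidef_allOnes m).kronecker (posSemidef_allOnes n), ?_, ?_⟩
  · rw [← smul_one_sub_kronecker_smul_one_sub]
    exact (posSemidef_card_smul_one_sub_allOnes m).kronecker
      (posSemidef_card_smul_one_sub_allOnes n)
  · rw [← smul_one_sub_kronecker_smul_one_add]
    exact (posSemidef_card_smul_one_sub_allOnes m).kronecker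
      (posSemidef_smul_one_add_allOnes n.cast_nonneg n)

/-- For positive integers `m`, `n`, the matrices `Jₘ ⊗ Jₙ`,
`mn I − n (Jₘ ⊗ Iₙ) − m (Iₘ ⊗ Jₙ) + Jₘ ⊗ Jₙ`, and
`mn I − n (Jₘ ⊗ Iₙ) + m (Iₘ ⊗ Jₙ) − Jₘ ⊗ Jₙ` are positive semidefinite. -/
theorem stmt_16 (m n : ℕ) (hm : 0 < m) (hn : 0 < n) :
    (allOnes m ⊗ₖ allOnes n).PosSemidef ∧
    (((m : ℝ) * n) • (1 : Matrix (Fin m × Fin n) (Fin m × Fin n) ℝ)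
      - (n : ℝ) • (allOnes m ⊗ₖ (1 : Matrix (Fin n) (Fin n) ℝ))
      - (m : ℝ) • ((1 : Matrix (Fin m) (Fin m) ℝ) ⊗ₖ allOnes n)
      + allOnes m ⊗ₖ allOnes n).PosSemidef ∧
    (((m : ℝ) * n) • (1 : Matrix (Fin m × Fin n) (Fin m × Fin n) ℝ)
      - (n : ℝ) • (allOnes m ⊗ₖ (1 : Matrix (Fin n) (Fin n) ℝ))
      + (m : ℝ) • ((1 : Matrix (Fin m) (Fin m) ℝ) ⊗ₖ allOnes n)
      - allOnes m ⊗ₖ allOnes n).PosSemidef :=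
  stmt_16_general m n
end
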